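/- arXiv:1410.1281 — 7 statements merged into one kernel-verified Lean document; each statement's English description precedes it below -/
import Mathlib

section
/- Fix an integer d ≥ 2 and a real c > 0, and let Z = Z_n be the number of (d+2)-element subsets τ of [n] all of whose (d+1)-element subsets are d-faces of Y_d(n, c/n). Then Z converges in distribution as n → ∞ to a Poisson random variable with mean λ = c^{d+2}/(d+2)!. In particular, P(Z = 0) → e^{−λ}, a limit strictly between 0 and 1. -/
open Finset Filter
open scoped Classical

noncomputable section

/-- The set of all possible `d`-faces: `(d+1)`-element subsets of `[n]`. -/
def allFaces (n d : ℕ) : Finset (Finset (Fin n)) :=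
  Finset.univ.filter (fun σ => σ.card = d + 1)

/-- Probability of the event `E` under `Y_d(n,p)`. -/
def probY (n d : ℕ) (p : ℝ) (E : Finset (Finset (Fin n)) → Prop) : ℝ :=
  ∑ F ∈ (allFaces n d).powerset,
    if E F then p ^ F.card * (1 - p) ^ ((allFaces n d).card - F.card) else 0

/-- Expectation of `X` under `Y_d(n,p)`. -/
def expectY (n d : ℕ) (p : ℝ) (X : Finset (Finset (Fin n)) → ℝ) : ℝ :=
  ∑ F ∈ (allFaces n d).powerset,
    p ^ F.card * (1 - p) ^ ((allFaces n d).card - F.card) * X F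

/-- Coefficient of the `d`-face `τ` in the boundary of `σ`. -/
def bdCoeff {n : ℕ} (τ σ : Finset (Fin n)) : ℝ :=
  if τ ⊆ σ ∧ τ.card + 1 = σ.card then
    ∑ v ∈ σ \ τ, (-1 : ℝ) ^ (σ.filter (fun w => w < v)).card
  else 0

/-- The boundary operator `∂_d(F) : ℝ^F → ℝ^{(d-1)-faces}`. -/
def boundaryMap (n : ℕ) (F : Finset (Finset (Fin n))) :
    (↥F → ℝ) →ₗ[ℝ] (Finset (Fin n) → ℝ) where
  toFun x := fun τ => ∑ σ ∈ F.attach, x σ * bdCoeff τ σ.1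
  map_add' x y := by
    funext τ
    simp [add_mul, Finset.sum_add_distrib]
  map_smul' c x := by
    funext τ
    simp [Finset.mul_sum, mul_assoc]

/-- Dimension of the kernel of `∂_d(F)`, i.e. `dim H_d`. -/
def dimKer (n : ℕ) (F : Finset (Finset (Fin n))) : ℕ :=
  Module.finrank ℝ (LinearMap.ker (boundaryMap n F))

/-- The real shadow of `F`. -/
def shadowR (n d : ℕ) (F : Finset (Finset (Fin n))) : Finset (Finset (Fin n)) :=
  (allFaces n d).filter (fun σ => σ ∉ F ∧ dimKer n F < dimKer n (insert σ F))

/-- The `(d+2)`-subsets all of whose `(d+1)`-subsets are faces of `F`. -/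
def simplexBoundaries (n d : ℕ) (F : Finset (Finset (Fin n))) : Finset (Finset (Fin n)) :=
  Finset.univ.filter (fun τ => τ.card = d + 2 ∧ ∀ s ∈ τ.powerset, s.card = d + 1 → s ∈ F)

/-- The boundary cycle of the `(d+2)`-subset `τ`, as a vector in `ℝ^F`. -/
def simplexCycle (n : ℕ) (F : Finset (Finset (Fin n))) (τ : Finset (Fin n)) : ↥F → ℝ :=
  fun σ => bdCoeff σ.1 τ


namespace St7
open scoped Topology


lemma sum_pow_powerset {α : Type*} [DecidableEq α] (A : Finset α) (x y : ℝ) :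
    ∑ F ∈ A.powerset, x ^ F.card * y ^ (A.card - F.card) = (x + y) ^ A.card := by
  induction A using Finset.induction_on with
  | empty => simp
  | @insert a s ha ih =>
    rw [Finset.sum_powerset_insert ha, Finset.card_insert_of_notMem ha]
    have h1 : ∀ F ∈ s.powerset, x ^ F.card * y ^ (s.card + 1 - F.card)
        = y * (x ^ F.card * y ^ (s.card - F.card)) := by
      intro F hF
      have hFc : F.card ≤ s.card := Finset.card_le_card (Finset.mem_powerset.1 hF)
      rw [show s.card + 1 - F.card = (s.card - F.card) + 1 by omega, pow_succ]
      ring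
    have h2 : ∀ F ∈ s.powerset, x ^ (insert a F).card * y ^ (s.card + 1 - (insert a F).card)
        = x * (x ^ F.card * y ^ (s.card - F.card)) := by
      intro F hF
      have hFs := Finset.mem_powerset.1 hF
      have haF : a ∉ F := fun hmem => ha (hFs hmem)
      have hFc : F.card ≤ s.card := Finset.card_le_card hFs
      rw [Finset.card_insert_of_notMem haF,
        show s.card + 1 - (F.card + 1) = s.card - F.card by omega, pow_succ]
      ring
    rw [Finset.sum_congr rfl h1, Finset.sum_congr rfl h2, ← Finset.mul_sum, ← Finset.mul_sum, ih,
      pow_succ]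
    ring

lemma prob_subset {α : Type*} [DecidableEq α] {A S : Finset α} (h : S ⊆ A) (p : ℝ) :
    ∑ F ∈ A.powerset, (if S ⊆ F then p ^ F.card * (1 - p) ^ (A.card - F.card) else 0)
      = p ^ S.card := by
  rw [← Finset.sum_filter]
  have key : ∑ F ∈ A.powerset.filter (fun F => S ⊆ F),
      p ^ F.card * (1 - p) ^ (A.card - F.card)
      = ∑ G ∈ (A \ S).powerset, p ^ S.card * (p ^ G.card * (1 - p) ^ ((A \ S).card - G.card)) := by
    refine Finset.sum_nbij' (i := fun F => F \ S) (j := fun G => S ∪ G) ?_ ?_ ?_ ?_ ?_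
    · intro F hF
      simp only [Finset.mem_filter, Finset.mem_powerset] at hF
      exact Finset.mem_powerset.2 (Finset.sdiff_subset_sdiff hF.1 Finset.Subset.rfl)
    · intro G hG
      simp only [Finset.mem_powerset] at hG
      simp only [Finset.mem_filter, Finset.mem_powerset]
      constructor
      · exact Finset.union_subset h (hG.trans Finset.sdiff_subset)
      · exact Finset.subset_union_left
    · intro F hF
      simp only [Finset.mem_filter, Finset.mem_powerset] at hF
      show S ∪ F \ S = F
      exact Finset.union_sdiff_of_subset hF.2
    · intro G hG
      simp only [Finset.mem_powerset] at hG
      have : Disjoint S G := Finset.disjoint_left.2 fun a haS haG =>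
        (Finset.mem_sdiff.1 (hG haG)).2 haS
      show (S ∪ G) \ S = G
      rw [Finset.union_sdiff_cancel_left this]
    · intro F hF
      simp only [Finset.mem_filter, Finset.mem_powerset] at hF
      have hd : Disjoint S (F \ S) := Finset.disjoint_sdiff
      have hcard : F.card = S.card + (F \ S).card := by
        rw [← Finset.card_union_of_disjoint hd, Finset.union_sdiff_of_subset hF.2]
      have h1 : (F \ S).card + S.card ≤ A.card := by
        rw [add_comm, ← hcard]; exact Finset.card_le_card hF.1
      have h2 : S.card ≤ A.card := Finset.card_le_card h
      rw [hcard, Finset.card_sdiff_of_subset h, pow_add,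
        show A.card - (S.card + (F \ S).card) = A.card - S.card - (F \ S).card by omega]
      ring
  rw [key, ← Finset.mul_sum, sum_pow_powerset]
  simp



def cand (n d : ℕ) : Finset (Finset (Fin n)) := Finset.powersetCard (d+2) Finset.univ

def facesOf (d : ℕ) {n : ℕ} (τ : Finset (Fin n)) : Finset (Finset (Fin n)) :=
  Finset.powersetCard (d+1) τ

def facesSet (d : ℕ) {n : ℕ} (T : Finset (Finset (Fin n))) : Finset (Finset (Fin n)) :=
  T.biUnion (facesOf d)

def vertSet {n : ℕ} (T : Finset (Finset (Fin n))) : Finset (Fin n) := T.biUnion id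

lemma card_facesOf {n d : ℕ} {τ : Finset (Fin n)} (h : τ.card = d + 2) :
    (facesOf d τ).card = d + 2 := by
  rw [facesOf, Finset.card_powersetCard, h]
  exact Nat.choose_succ_self_right (d+1)

lemma mem_facesOf {n d : ℕ} {τ σ : Finset (Fin n)} :
    σ ∈ facesOf d τ ↔ σ ⊆ τ ∧ σ.card = d + 1 := Finset.mem_powersetCard

lemma choose_le_self {j d : ℕ} (h : j ≤ d + 2) : j.choose (d+1) ≤ j := by
  rcases Nat.lt_or_ge j (d+1) with hj | hj
  · rw [Nat.choose_eq_zero_of_lt hj]; omega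
  · rcases Nat.eq_or_lt_of_le hj with hj1 | hj2
    · rw [← hj1, Nat.choose_self]; omega
    · have : j = d + 2 := by omega
      subst this
      rw [Nat.choose_succ_self_right]

lemma step {n d : ℕ} {T : Finset (Finset (Fin n))} {τ : Finset (Fin n)}
    (hτ : τ.card = d + 2) :
    (facesSet d T).card + (vertSet (insert τ T)).card
      ≤ (facesSet d (insert τ T)).card + (vertSet T).card := by
  have hFa : facesSet d (insert τ T) = facesOf d τ ∪ facesSet d T := by
    rw [facesSet, Finset.biUnion_insert]; rfl
  have hV : vertSet (insert τ T) = τ ∪ vertSet T := by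
    rw [vertSet, Finset.biUnion_insert]; rfl
  have c1 : (facesOf d τ \ facesSet d T).card + (facesSet d T).card
      = (facesSet d (insert τ T)).card := by rw [hFa, Finset.card_sdiff_add_card]
  have c2 : (τ \ vertSet T).card + (vertSet T).card = (vertSet (insert τ T)).card := by
    rw [hV, Finset.card_sdiff_add_card]
  have key : (τ \ vertSet T).card ≤ (facesOf d τ \ facesSet d T).card := by
    have e1 : (τ ∩ vertSet T).card + (τ \ vertSet T).card = τ.card :=
      Finset.card_inter_add_card_sdiff τ (vertSet T)
    have e2 : (facesOf d τ ∩ facesSet d T).card + (facesOf d τ \ facesSet d T).card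
        = (facesOf d τ).card := Finset.card_inter_add_card_sdiff _ _
    have hsub : facesOf d τ ∩ facesSet d T ⊆ Finset.powersetCard (d+1) (τ ∩ vertSet T) := by
      intro σ hσ
      rw [Finset.mem_inter] at hσ
      obtain ⟨hσ1, hσ2⟩ := hσ
      rw [mem_facesOf] at hσ1
      rw [facesSet, Finset.mem_biUnion] at hσ2
      obtain ⟨τ', hτ'T, hστ'⟩ := hσ2
      rw [mem_facesOf] at hστ'
      refine Finset.mem_powersetCard.2 ⟨?_, hσ1.2⟩
      exact Finset.subset_inter hσ1.1 (hστ'.1.trans (fun v hv =>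
        Finset.mem_biUnion.2 ⟨τ', hτ'T, hv⟩))
    have hle : (facesOf d τ ∩ facesSet d T).card ≤ (τ ∩ vertSet T).card := by
      calc (facesOf d τ ∩ facesSet d T).card
          ≤ ((τ ∩ vertSet T).card).choose (d+1) := by
            rw [← Finset.card_powersetCard]; exact Finset.card_le_card hsub
        _ ≤ (τ ∩ vertSet T).card := choose_le_self (by
            have := Finset.card_le_card (Finset.inter_subset_left (s₂ := vertSet T) (s₁ := τ))
            omega)
    have hfc := card_facesOf (n := n) (d := d) hτ
    omega
  omega

lemma mono {n d : ℕ} : ∀ (k : ℕ) (T₀ T : Finset (Finset (Fin n))), (T \ T₀).card = k →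
    T₀ ⊆ T → (∀ σ ∈ T, σ.card = d + 2) →
    (facesSet d T₀).card + (vertSet T).card ≤ (facesSet d T).card + (vertSet T₀).card := by
  intro k
  induction k with
  | zero =>
    intro T₀ T hk hsub _
    have : T = T₀ := by
      have h0 : T \ T₀ = ∅ := Finset.card_eq_zero.1 hk
      have : T ⊆ T₀ := fun x hx => by
        by_contra hx0
        exact absurd (Finset.mem_sdiff.2 ⟨hx, hx0⟩) (by rw [h0]; simp)
      exact Finset.Subset.antisymm this hsub
    subst this; omega
  | succ k ih =>
    intro T₀ T hk hsub hc
    obtain ⟨τ, hτmem⟩ : (T \ T₀).Nonempty := Finset.card_pos.1 (by omega)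
    rw [Finset.mem_sdiff] at hτmem
    have hsub' : insert τ T₀ ⊆ T := Finset.insert_subset hτmem.1 hsub
    have hk' : (T \ insert τ T₀).card = k := by
      rw [Finset.sdiff_insert, Finset.card_erase_of_mem (Finset.mem_sdiff.2 hτmem)]
      omega
    have h1 := ih (insert τ T₀) T hk' hsub' hc
    have h2 := step (T := T₀) (hc τ hτmem.1)
    omega

lemma vert_le_faces {n d : ℕ} {T : Finset (Finset (Fin n))} (hc : ∀ σ ∈ T, σ.card = d + 2) :
    (vertSet T).card ≤ (facesSet d T).card := by
  have := mono (T \ ∅).card ∅ T rfl (Finset.empty_subset T) hc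
  simpa [facesSet, vertSet] using this

lemma pair_bound {n d : ℕ} {τ₁ τ₂ : Finset (Fin n)} (h1 : τ₁.card = d+2) (h2 : τ₂.card = d+2)
    (hne : τ₁ ≠ τ₂) (hint : d + 1 ≤ (τ₁ ∩ τ₂).card) :
    (vertSet {τ₁, τ₂}).card + d ≤ (facesSet d {τ₁, τ₂}).card := by
  have hVeq : vertSet {τ₁, τ₂} = τ₁ ∪ τ₂ := by
    rw [vertSet, show ({τ₁, τ₂} : Finset (Finset (Fin n))) = insert τ₁ {τ₂} from rfl,
      Finset.biUnion_insert, Finset.singleton_biUnion]; rfl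
  have hFeq : facesSet d {τ₁, τ₂} = facesOf d τ₁ ∪ facesOf d τ₂ := by
    rw [facesSet, show ({τ₁, τ₂} : Finset (Finset (Fin n))) = insert τ₁ {τ₂} from rfl,
      Finset.biUnion_insert, Finset.singleton_biUnion]
  have hi : (τ₁ ∩ τ₂).card = d + 1 := by
    rcases Nat.eq_or_lt_of_le hint with h | h
    · omega
    · exfalso
      have hs1 : τ₁ ∩ τ₂ ⊆ τ₁ := Finset.inter_subset_left
      have hc1 : (τ₁ ∩ τ₂).card ≤ d + 2 := h1 ▸ Finset.card_le_card hs1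
      have : (τ₁ ∩ τ₂).card = d + 2 := by omega
      have he1 : τ₁ ∩ τ₂ = τ₁ := Finset.eq_of_subset_of_card_le hs1 (by omega)
      have he2 : τ₁ ∩ τ₂ = τ₂ := Finset.eq_of_subset_of_card_le Finset.inter_subset_right
        (by omega)
      exact hne (he1.symm.trans he2)
  have hV : (vertSet {τ₁, τ₂}).card = d + 3 := by
    have := Finset.card_union_add_card_inter τ₁ τ₂
    rw [hVeq]; omega
  have hFint : (facesOf d τ₁ ∩ facesOf d τ₂).card ≤ 1 := by
    refine Finset.card_le_one.2 fun a ha b hb => ?_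
    rw [Finset.mem_inter, mem_facesOf, mem_facesOf] at ha hb
    have ha' : a = τ₁ ∩ τ₂ := Finset.eq_of_subset_of_card_le
      (Finset.subset_inter ha.1.1 ha.2.1) (by omega)
    have hb' : b = τ₁ ∩ τ₂ := Finset.eq_of_subset_of_card_le
      (Finset.subset_inter hb.1.1 hb.2.1) (by omega)
    rw [ha', hb']
  have hF : 2 * d + 3 ≤ (facesSet d {τ₁, τ₂}).card := by
    have hu := Finset.card_union_add_card_inter (facesOf d τ₁) (facesOf d τ₂)
    have hf1 := card_facesOf (n := n) (d := d) h1
    have hf2 := card_facesOf (n := n) (d := d) h2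
    rw [hFeq]; omega
  omega

lemma nongeneric_bound {n d : ℕ} {T : Finset (Finset (Fin n))}
    (hc : ∀ σ ∈ T, σ.card = d + 2) {τ₁ τ₂ : Finset (Fin n)} (m1 : τ₁ ∈ T) (m2 : τ₂ ∈ T)
    (hne : τ₁ ≠ τ₂) (hint : d + 1 ≤ (τ₁ ∩ τ₂).card) :
    (vertSet T).card + d ≤ (facesSet d T).card := by
  have hsub : ({τ₁, τ₂} : Finset (Finset (Fin n))) ⊆ T := by
    intro x hx; rcases Finset.mem_insert.1 hx with h | h
    · exact h ▸ m1
    · exact (Finset.mem_singleton.1 h) ▸ m2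
  have hm := mono (T \ {τ₁, τ₂}).card {τ₁, τ₂} T rfl hsub hc
  have hp := pair_bound (hc τ₁ m1) (hc τ₂ m2) hne hint
  omega

lemma generic_card {n d : ℕ} {T : Finset (Finset (Fin n))}
    (hc : ∀ σ ∈ T, σ.card = d + 2)
    (hg : ∀ τ₁ ∈ T, ∀ τ₂ ∈ T, τ₁ ≠ τ₂ → (τ₁ ∩ τ₂).card ≤ d) :
    (facesSet d T).card = T.card * (d + 2) := by
  rw [facesSet, Finset.card_biUnion, Finset.sum_congr rfl (fun τ hτ => card_facesOf (hc τ hτ)),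
    Finset.sum_const, smul_eq_mul]
  intro τ₁ m1 τ₂ m2 hne
  rw [Function.onFun, Finset.disjoint_left]
  intro σ hσ1 hσ2
  rw [mem_facesOf] at hσ1 hσ2
  have : σ ⊆ τ₁ ∩ τ₂ := Finset.subset_inter hσ1.1 hσ2.1
  have := Finset.card_le_card this
  have := hg τ₁ m1 τ₂ m2 hne
  omega

lemma facesSet_card_le {n d : ℕ} {T : Finset (Finset (Fin n))}
    (hc : ∀ σ ∈ T, σ.card = d + 2) : (facesSet d T).card ≤ T.card * (d + 2) := by
  calc (facesSet d T).card ≤ ∑ τ ∈ T, (facesOf d τ).card := Finset.card_biUnion_le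
    _ = T.card * (d + 2) := by
        rw [Finset.sum_congr rfl (fun τ hτ => card_facesOf (hc τ hτ)), Finset.sum_const,
          smul_eq_mul]

lemma vertSet_card_le {n d : ℕ} {T : Finset (Finset (Fin n))}
    (hc : ∀ σ ∈ T, σ.card = d + 2) : (vertSet T).card ≤ T.card * (d + 2) := by
  calc (vertSet T).card ≤ ∑ τ ∈ T, τ.card := Finset.card_biUnion_le
    _ = T.card * (d + 2) := by
        rw [Finset.sum_congr rfl hc, Finset.sum_const, smul_eq_mul]


def Wt (n d : ℕ) (p : ℝ) (F : Finset (Finset (Fin n))) : ℝ :=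
  p ^ F.card * (1 - p) ^ ((allFaces n d).card - F.card)

def Ssum (n d r : ℕ) (p : ℝ) : ℝ :=
  ∑ T ∈ (cand n d).powersetCard r, p ^ (facesSet d T).card

lemma mem_cand {n d : ℕ} {τ : Finset (Fin n)} : τ ∈ cand n d ↔ τ.card = d + 2 := by
  simp [cand, Finset.mem_powersetCard_univ]

lemma mem_sB_iff {n d : ℕ} {F : Finset (Finset (Fin n))} {τ : Finset (Fin n)}
    (h : τ.card = d + 2) : τ ∈ simplexBoundaries n d F ↔ facesOf d τ ⊆ F := by
  rw [simplexBoundaries, Finset.mem_filter]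
  simp only [Finset.mem_univ, true_and, Finset.mem_powerset]
  constructor
  · intro ⟨_, h2⟩ σ hσ
    rw [mem_facesOf] at hσ
    exact h2 σ hσ.1 hσ.2
  · intro hsub
    exact ⟨h, fun σ hσs hσc => hsub (mem_facesOf.2 ⟨hσs, hσc⟩)⟩

lemma sB_subset_cand {n d : ℕ} {F : Finset (Finset (Fin n))} :
    simplexBoundaries n d F ⊆ cand n d := by
  intro τ hτ
  rw [simplexBoundaries, Finset.mem_filter] at hτ
  exact mem_cand.2 hτ.2.1

lemma subset_sB_iff {n d : ℕ} {F T : Finset (Finset (Fin n))} (hT : T ⊆ cand n d) :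
    T ⊆ simplexBoundaries n d F ↔ facesSet d T ⊆ F := by
  rw [facesSet, Finset.biUnion_subset]
  constructor
  · intro h τ hτ
    exact (mem_sB_iff (mem_cand.1 (hT hτ))).1 (h hτ)
  · intro h τ hτ
    exact (mem_sB_iff (mem_cand.1 (hT hτ))).2 (h τ hτ)

lemma facesSet_subset_allFaces {n d : ℕ} {T : Finset (Finset (Fin n))} :
    facesSet d T ⊆ allFaces n d := by
  intro σ hσ
  rw [facesSet, Finset.mem_biUnion] at hσ
  obtain ⟨τ, _, hστ⟩ := hσ
  rw [mem_facesOf] at hστ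
  rw [allFaces, Finset.mem_filter]
  exact ⟨Finset.mem_univ σ, hστ.2⟩

lemma choose_eq_sum (n d r : ℕ) (F : Finset (Finset (Fin n))) :
    (((simplexBoundaries n d F).card).choose r : ℝ)
      = ∑ T ∈ (cand n d).powersetCard r,
          (if T ⊆ simplexBoundaries n d F then (1 : ℝ) else 0) := by
  have hset : (simplexBoundaries n d F).powersetCard r
      = ((cand n d).powersetCard r).filter (fun T => T ⊆ simplexBoundaries n d F) := by
    ext T
    simp only [Finset.mem_powersetCard, Finset.mem_filter]
    constructor
    · intro ⟨h1, h2⟩; exact ⟨⟨h1.trans sB_subset_cand, h2⟩, h1⟩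
    · intro ⟨⟨_, h2⟩, h3⟩; exact ⟨h3, h2⟩
  rw [Finset.sum_boole, ← Finset.card_powersetCard, hset]

lemma S_eq (n d r : ℕ) (p : ℝ) :
    (∑ F ∈ (allFaces n d).powerset, Wt n d p F * (((simplexBoundaries n d F).card).choose r : ℝ))
      = Ssum n d r p := by
  have step1 : ∀ F ∈ (allFaces n d).powerset,
      Wt n d p F * (((simplexBoundaries n d F).card).choose r : ℝ)
      = ∑ T ∈ (cand n d).powersetCard r,
          (if facesSet d T ⊆ F then Wt n d p F else 0) := by
    intro F _
    rw [choose_eq_sum, Finset.mul_sum]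
    refine Finset.sum_congr rfl fun T hT => ?_
    have hTc : T ⊆ cand n d := (Finset.mem_powersetCard.1 hT).1
    have hiff := subset_sB_iff (F := F) hTc
    by_cases h : facesSet d T ⊆ F
    · rw [if_pos h, if_pos (hiff.2 h), mul_one]
    · rw [if_neg h, if_neg (fun hh => h (hiff.1 hh)), mul_zero]
  rw [Finset.sum_congr rfl step1, Finset.sum_comm]
  refine Finset.sum_congr rfl fun T hT => ?_
  have hTc : T ⊆ cand n d := (Finset.mem_powersetCard.1 hT).1
  exact prob_subset (facesSet_subset_allFaces) p

lemma alt_sum (M s : ℕ) :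
    ∑ j ∈ Finset.range (s+1), (-1:ℝ)^j * ((M+1).choose j : ℝ) = (-1)^s * (M.choose s : ℝ) := by
  induction s with
  | zero => simp
  | succ s ih =>
    rw [Finset.sum_range_succ, ih,
      show ((M+1).choose (s+1)) = M.choose s + M.choose (s+1) from Nat.choose_succ_succ M s]
    push_cast
    ring

lemma point_eval (m k s : ℕ) :
    ∑ j ∈ Finset.range (s+1), (-1:ℝ)^j * ((k+j).choose k : ℝ) * (m.choose (k+j) : ℝ)
      = if m < k then 0 else if m = k then 1
        else (m.choose k : ℝ) * ((-1)^s * ((m - k - 1).choose s : ℝ)) := by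
  rcases Nat.lt_trichotomy m k with h | h | h
  · rw [if_pos h]
    refine Finset.sum_eq_zero fun j _ => ?_
    rw [Nat.choose_eq_zero_of_lt (show m < k + j by omega), Nat.cast_zero, mul_zero]
  · rw [if_neg (by omega), if_pos h]
    rw [Finset.sum_eq_single 0]
    · subst h; simp
    · intro j _ hj
      rw [Nat.choose_eq_zero_of_lt (show m < k + j by omega), Nat.cast_zero, mul_zero]
    · intro habs; exact absurd (Finset.mem_range.2 (by omega)) habs
  · rw [if_neg (by omega), if_neg (by omega)]
    have key : ∀ j, ((k+j).choose k : ℝ) * (m.choose (k+j) : ℝ)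
        = (m.choose k : ℝ) * ((m - k).choose j : ℝ) := by
      intro j
      rcases le_or_gt (k + j) m with hle | hlt
      · have := Nat.choose_mul (n := m) (k := k + j) (s := k) (Nat.le_add_right k j)
        rw [Nat.add_sub_cancel_left] at this
        have := congrArg (fun x : ℕ => (x : ℝ)) this
        push_cast at this
        linarith [this]
      · rw [Nat.choose_eq_zero_of_lt hlt, Nat.choose_eq_zero_of_lt (show m - k < j by omega)]
        push_cast; ring
    have step : ∀ j ∈ Finset.range (s+1),
        (-1:ℝ)^j * ((k+j).choose k : ℝ) * (m.choose (k+j) : ℝ)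
        = (m.choose k : ℝ) * ((-1:ℝ)^j * (((m - k - 1) + 1).choose j : ℝ)) := by
      intro j _
      rw [mul_assoc, key j, show m - k - 1 + 1 = m - k by omega]
      ring
    rw [Finset.sum_congr rfl step, ← Finset.mul_sum, alt_sum]

lemma point_le_even (m k s : ℕ) (hs : Even s) :
    (if m = k then (1:ℝ) else 0)
      ≤ ∑ j ∈ Finset.range (s+1), (-1:ℝ)^j * ((k+j).choose k : ℝ) * (m.choose (k+j) : ℝ) := by
  rw [point_eval]
  by_cases h1 : m < k
  · rw [if_pos h1, if_neg (show ¬ m = k by omega)]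
  · rw [if_neg h1]
    by_cases h2 : m = k
    · rw [if_pos h2, if_pos h2]
    · rw [if_neg h2, if_neg h2, hs.neg_one_pow]
      positivity

lemma point_ge_odd (m k s : ℕ) (hs : Odd s) :
    ∑ j ∈ Finset.range (s+1), (-1:ℝ)^j * ((k+j).choose k : ℝ) * (m.choose (k+j) : ℝ)
      ≤ (if m = k then (1:ℝ) else 0) := by
  rw [point_eval]
  by_cases h1 : m < k
  · rw [if_pos h1, if_neg (show ¬ m = k by omega)]
  · rw [if_neg h1]
    by_cases h2 : m = k
    · rw [if_pos h2, if_pos h2]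
    · rw [if_neg h2, if_neg h2, hs.neg_one_pow]
      have ha : (0:ℝ) ≤ (m.choose k : ℝ) := Nat.cast_nonneg _
      have hb : (0:ℝ) ≤ ((m - k - 1).choose s : ℝ) := Nat.cast_nonneg _
      nlinarith

lemma probY_eq_sum (n d k : ℕ) (p : ℝ) :
    probY n d p (fun F => (simplexBoundaries n d F).card = k)
      = ∑ F ∈ (allFaces n d).powerset,
          Wt n d p F * (if (simplexBoundaries n d F).card = k then (1:ℝ) else 0) := by
  rw [probY]
  refine Finset.sum_congr rfl fun F _ => ?_
  by_cases h : (simplexBoundaries n d F).card = k <;> simp [h, Wt]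

lemma sum_swap_eq (n d k s : ℕ) (p : ℝ) :
    ∑ F ∈ (allFaces n d).powerset, Wt n d p F *
        (∑ j ∈ Finset.range (s+1),
          (-1:ℝ)^j * ((k+j).choose k : ℝ) * (((simplexBoundaries n d F).card).choose (k+j) : ℝ))
      = ∑ j ∈ Finset.range (s+1), (-1:ℝ)^j * ((k+j).choose k : ℝ) * Ssum n d (k+j) p := by
  simp_rw [Finset.mul_sum]
  rw [Finset.sum_comm]
  refine Finset.sum_congr rfl fun j _ => ?_
  rw [← S_eq n d (k+j) p, Finset.mul_sum]
  refine Finset.sum_congr rfl fun F _ => ?_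
  ring

lemma Wt_nonneg {n d : ℕ} {p : ℝ} (hp0 : 0 ≤ p) (hp1 : p ≤ 1) (F : Finset (Finset (Fin n))) :
    0 ≤ Wt n d p F :=
  mul_nonneg (pow_nonneg hp0 _) (pow_nonneg (by linarith) _)

lemma probY_le_even (n d k s : ℕ) (p : ℝ) (hp0 : 0 ≤ p) (hp1 : p ≤ 1) (hs : Even s) :
    probY n d p (fun F => (simplexBoundaries n d F).card = k)
      ≤ ∑ j ∈ Finset.range (s+1), (-1:ℝ)^j * ((k+j).choose k : ℝ) * Ssum n d (k+j) p := by
  rw [probY_eq_sum, ← sum_swap_eq]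
  refine Finset.sum_le_sum fun F _ => ?_
  exact mul_le_mul_of_nonneg_left (point_le_even _ k s hs) (Wt_nonneg hp0 hp1 F)

lemma probY_ge_odd (n d k s : ℕ) (p : ℝ) (hp0 : 0 ≤ p) (hp1 : p ≤ 1) (hs : Odd s) :
    ∑ j ∈ Finset.range (s+1), (-1:ℝ)^j * ((k+j).choose k : ℝ) * Ssum n d (k+j) p
      ≤ probY n d p (fun F => (simplexBoundaries n d F).card = k) := by
  rw [probY_eq_sum, ← sum_swap_eq]
  refine Finset.sum_le_sum fun F _ => ?_
  exact mul_le_mul_of_nonneg_left (point_ge_odd _ k s hs) (Wt_nonneg hp0 hp1 F)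

lemma tendsto_choose_div_pow (k : ℕ) :
    Tendsto (fun n : ℕ => (n.choose k : ℝ) / (n:ℝ)^k) atTop (𝓝 (1 / (k.factorial : ℝ))) := by
  have hfac : Tendsto (fun n : ℕ => ∏ i ∈ Finset.range k, (((n:ℝ) - i) / n)) atTop (𝓝 1) := by
    have h1 : Tendsto (fun n : ℕ => ∏ i ∈ Finset.range k, (((n:ℝ) - i) / n)) atTop
        (𝓝 (∏ _i ∈ Finset.range k, (1:ℝ))) := by
      refine tendsto_finset_prod _ fun i _ => ?_
      have h2 : Tendsto (fun n : ℕ => 1 - (i:ℝ) * (1/n)) atTop (𝓝 (1 - (i:ℝ) * 0)) :=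
        tendsto_const_nhds.sub (tendsto_const_nhds.mul tendsto_one_div_atTop_nhds_zero_nat)
      rw [mul_zero, sub_zero] at h2
      refine h2.congr' ?_
      filter_upwards [Filter.eventually_ge_atTop 1] with n hn
      have hn0 : (n:ℝ) ≠ 0 := by positivity
      field_simp
    simpa using h1
  have heq : ∀ᶠ n : ℕ in atTop, (1 / (k.factorial : ℝ)) * ∏ i ∈ Finset.range k, (((n:ℝ) - i) / n)
      = (n.choose k : ℝ) / (n:ℝ)^k := by
    filter_upwards [Filter.eventually_ge_atTop (max k 1)] with n hn
    have hnk : k ≤ n := le_trans (le_max_left k 1) hn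
    have hn1 : 1 ≤ n := le_trans (le_max_right k 1) hn
    have hn0 : (n:ℝ) ≠ 0 := by positivity
    have hdf : ((n.descFactorial k : ℕ) : ℝ) = ∏ i ∈ Finset.range k, ((n:ℝ) - i) := by
      rw [Nat.descFactorial_eq_prod_range, Nat.cast_prod]
      exact Finset.prod_congr rfl fun i hi =>
        Nat.cast_sub (le_trans (Nat.le_of_lt_succ (Nat.lt_succ_of_lt (Finset.mem_range.1 hi))) hnk)
    have hch : ((k.factorial : ℝ)) * (n.choose k : ℝ) = ∏ i ∈ Finset.range k, ((n:ℝ) - i) := by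
      rw [← hdf, ← Nat.cast_mul, Nat.descFactorial_eq_factorial_mul_choose]
    have hfa : (k.factorial : ℝ) ≠ 0 := Nat.cast_ne_zero.2 (Nat.factorial_ne_zero k)
    rw [Finset.prod_div_distrib, Finset.prod_const, Finset.card_range, ← hch]
    field_simp
  have := (tendsto_const_nhds (x := 1 / (k.factorial : ℝ)) (f := atTop)).mul hfac
  rw [mul_one] at this
  exact this.congr' heq

lemma card_cand (n d : ℕ) : (cand n d).card = n.choose (d+2) := by
  rw [cand, Finset.card_powersetCard, Finset.card_univ, Fintype.card_fin]

lemma cand_atTop (d : ℕ) : Tendsto (fun n : ℕ => (cand n d).card) atTop atTop := by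
  have h1 : Tendsto (fun n : ℕ => ((n.choose (d+2) : ℝ))) atTop atTop := by
    have hpow : Tendsto (fun n : ℕ => ((n:ℝ))^(d+2)) atTop atTop :=
      (tendsto_pow_atTop (by omega)).comp tendsto_natCast_atTop_atTop
    have h4 := Filter.Tendsto.pos_mul_atTop
      (show (0:ℝ) < 1/((d+2).factorial : ℝ) by positivity)
      (tendsto_choose_div_pow (d+2)) hpow
    refine h4.congr' ?_
    filter_upwards [Filter.eventually_ge_atTop 1] with n hn
    have hn0 : ((n:ℝ))^(d+2) ≠ 0 := by positivity
    field_simp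
  have h2 : Tendsto (fun n : ℕ => n.choose (d+2)) atTop atTop :=
    tendsto_natCast_atTop_iff (R := ℝ).1 h1
  exact h2.congr fun n => (card_cand n d).symm

lemma main_tendsto (d r : ℕ) (c : ℝ) :
    Tendsto (fun n : ℕ => (((cand n d).card).choose r : ℝ) * (c / n)^(r*(d+2))) atTop
      (𝓝 ((c^(d+2) / ((d+2).factorial : ℝ))^r / (r.factorial : ℝ))) := by
  have h1 : Tendsto (fun n : ℕ =>
      (((cand n d).card).choose r : ℝ) / ((cand n d).card : ℝ)^r) atTop
      (𝓝 (1/(r.factorial:ℝ))) := (tendsto_choose_div_pow r).comp (cand_atTop d)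
  have h2 : Tendsto (fun n : ℕ => ((n.choose (d+2) : ℝ) / (n:ℝ)^(d+2))^r) atTop
      (𝓝 ((1/(((d+2).factorial):ℝ))^r)) := (tendsto_choose_div_pow (d+2)).pow r
  have h3 := (h1.mul h2).mul_const (c^(r*(d+2)))
  have hconst : 1/(r.factorial:ℝ) * (1/(((d+2).factorial):ℝ))^r * c^(r*(d+2))
      = (c^(d+2) / ((d+2).factorial : ℝ))^r / (r.factorial : ℝ) := by
    have hfa : ((d+2).factorial : ℝ) ≠ 0 := Nat.cast_ne_zero.2 (Nat.factorial_ne_zero _)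
    have hfr : ((r.factorial) : ℝ) ≠ 0 := Nat.cast_ne_zero.2 (Nat.factorial_ne_zero _)
    rw [div_pow, one_pow, mul_comm r (d+2), pow_mul]
    field_simp
    rw [← mul_pow, mul_div_cancel₀ _ hfa]
    try exact Or.inl trivial
  rw [hconst] at h3
  refine h3.congr' ?_
  filter_upwards [Filter.eventually_ge_atTop (d+2), Filter.eventually_ge_atTop 1] with n hn hn1
  have hN : 1 ≤ (cand n d).card := by
    rw [card_cand]; exact Nat.choose_pos hn
  have hN0 : ((cand n d).card : ℝ) ≠ 0 := by
    simp only [ne_eq, Nat.cast_eq_zero]; omega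
  have hn0 : (n:ℝ) ≠ 0 := by
    have : (1:ℕ) ≤ n := hn1
    simp only [ne_eq, Nat.cast_eq_zero]; omega
  rw [card_cand n d]
  rw [div_pow, div_pow, mul_comm r (d+2), pow_mul]
  have hNr : ((n.choose (d+2) : ℝ))^r ≠ 0 := by
    rw [card_cand] at hN0; positivity
  have hnp : (((n:ℝ))^(d+2))^r ≠ 0 := by positivity
  field_simp
  try ring
  try exact Or.inl trivial

def genPred (d : ℕ) {n : ℕ} (T : Finset (Finset (Fin n))) : Prop :=
  ∀ τ₁ ∈ T, ∀ τ₂ ∈ T, τ₁ ≠ τ₂ → (τ₁ ∩ τ₂).card ≤ d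

lemma Ssum_decomp (n d r : ℕ) (p : ℝ) :
    Ssum n d r p = ((((cand n d).card).choose r : ℝ)) * p^(r*(d+2))
      - (((((cand n d).powersetCard r).filter (fun T => ¬ genPred d T)).card : ℝ)) * p^(r*(d+2))
      + ∑ T ∈ ((cand n d).powersetCard r).filter (fun T => ¬ genPred d T),
          p^(facesSet d T).card := by
  rw [Ssum, ← Finset.sum_filter_add_sum_filter_not ((cand n d).powersetCard r)
    (fun T => genPred d T)]
  have hgen : ∀ T ∈ ((cand n d).powersetCard r).filter (fun T => genPred d T),
      p ^ (facesSet d T).card = p^(r*(d+2)) := by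
    intro T hT
    rw [Finset.mem_filter, Finset.mem_powersetCard] at hT
    rw [generic_card (fun σ hσ => mem_cand.1 (hT.1.1 hσ)) hT.2, hT.1.2]
  rw [Finset.sum_congr rfl hgen, Finset.sum_const, nsmul_eq_mul]
  have hsplit := Finset.card_filter_add_card_filter_not
    (s := (cand n d).powersetCard r) (p := fun T => genPred d T)
  rw [Finset.card_powersetCard] at hsplit
  have hle : (((cand n d).powersetCard r).filter (fun T => ¬ genPred d T)).card
      ≤ ((cand n d).card).choose r := by omega
  have hcardeq : ((((cand n d).powersetCard r).filter (fun T => genPred d T)).card : ℝ)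
      = (((cand n d).card).choose r : ℝ)
        - ((((cand n d).powersetCard r).filter (fun T => ¬ genPred d T)).card : ℝ) := by
    have : (((cand n d).powersetCard r).filter (fun T => genPred d T)).card
        = ((cand n d).card).choose r
          - (((cand n d).powersetCard r).filter (fun T => ¬ genPred d T)).card := by omega
    rw [this, Nat.cast_sub hle]
  rw [hcardeq]
  ring

lemma nongen_le_err (n d r : ℕ) (p : ℝ) (hp0 : 0 ≤ p) (hp1 : p ≤ 1) :
    (((((cand n d).powersetCard r).filter (fun T => ¬ genPred d T)).card : ℝ)) * p^(r*(d+2))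
      ≤ ∑ T ∈ ((cand n d).powersetCard r).filter (fun T => ¬ genPred d T),
          p^(facesSet d T).card := by
  rw [← nsmul_eq_mul, ← Finset.sum_const]
  refine Finset.sum_le_sum fun T hT => ?_
  rw [Finset.mem_filter, Finset.mem_powersetCard] at hT
  refine pow_le_pow_of_le_one hp0 hp1 ?_
  have := facesSet_card_le (T := T) (d := d) (fun σ hσ => mem_cand.1 (hT.1.1 hσ))
  rw [hT.1.2] at this
  exact this

lemma err_le (n d r : ℕ) (hd : 1 ≤ d) (p : ℝ) (hp0 : 0 ≤ p) (hp1 : p ≤ 1) :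
    ∑ T ∈ ((cand n d).powersetCard r).filter (fun T => ¬ genPred d T), p^(facesSet d T).card
      ≤ ((2:ℝ)^(2^(r*(d+2)))) * p * (1+p)^n := by
  set S' := ((cand n d).powersetCard r).filter (fun T => ¬ genPred d T) with hS'
  have step1 : ∑ T ∈ S', p^(facesSet d T).card ≤ ∑ T ∈ S', p^((vertSet T).card + 1) := by
    refine Finset.sum_le_sum fun T hT => ?_
    rw [hS', Finset.mem_filter, Finset.mem_powersetCard] at hT
    have hcards : ∀ σ ∈ T, σ.card = d + 2 := fun σ hσ => mem_cand.1 (hT.1.1 hσ)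
    obtain ⟨τ₁, hτ₁, τ₂, hτ₂, hne, hint⟩ : ∃ τ₁ ∈ T, ∃ τ₂ ∈ T, τ₁ ≠ τ₂ ∧ d + 1 ≤ (τ₁ ∩ τ₂).card := by
      have := hT.2
      rw [genPred] at this
      push_neg at this
      obtain ⟨τ₁, h1, τ₂, h2, h3, h4⟩ := this
      exact ⟨τ₁, h1, τ₂, h2, h3, h4⟩
    have hb := nongeneric_bound hcards hτ₁ hτ₂ hne hint
    exact pow_le_pow_of_le_one hp0 hp1 (by omega)
  have step2 : ∑ T ∈ S', p^((vertSet T).card + 1)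
      = ∑ V ∈ (Finset.univ : Finset (Fin n)).powerset,
          ∑ T ∈ S'.filter (fun T => vertSet T = V), p^(V.card + 1) := by
    rw [Finset.sum_fiberwise_of_maps_to' (fun T _ => Finset.mem_powerset.2
      (Finset.subset_univ _)) (fun V => p^(V.card + 1))]
  have step3 : ∀ V ∈ (Finset.univ : Finset (Fin n)).powerset,
      ∑ T ∈ S'.filter (fun T => vertSet T = V), p^(V.card + 1)
        ≤ ((2:ℝ)^(2^(r*(d+2)))) * p^(V.card + 1) := by
    intro V _
    rw [Finset.sum_const, nsmul_eq_mul]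
    refine mul_le_mul_of_nonneg_right ?_ (pow_nonneg hp0 _)
    rcases Finset.eq_empty_or_nonempty (S'.filter (fun T => vertSet T = V)) with he | hne
    · rw [he, Finset.card_empty, Nat.cast_zero]
      positivity
    · obtain ⟨T₀, hT₀⟩ := hne
      rw [Finset.mem_filter] at hT₀
      have hVcard : V.card ≤ r * (d+2) := by
        rw [← hT₀.2]
        have h1 := hT₀.1
        rw [hS', Finset.mem_filter, Finset.mem_powersetCard] at h1
        have := vertSet_card_le (T := T₀) (d := d) (fun σ hσ => mem_cand.1 (h1.1.1 hσ))
        rw [h1.1.2] at this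
        exact this
      have hsubfib : S'.filter (fun T => vertSet T = V) ⊆ V.powerset.powerset := by
        intro T hT
        rw [Finset.mem_filter] at hT
        rw [Finset.mem_powerset]
        intro τ hτ
        rw [Finset.mem_powerset]
        rw [← hT.2]
        intro v hv
        rw [vertSet, Finset.mem_biUnion]
        exact ⟨τ, hτ, hv⟩
      have hcardle : (S'.filter (fun T => vertSet T = V)).card ≤ 2^(2^(r*(d+2))) := by
        calc (S'.filter (fun T => vertSet T = V)).card ≤ V.powerset.powerset.card :=
              Finset.card_le_card hsubfib
          _ = 2^(2^V.card) := by rw [Finset.card_powerset, Finset.card_powerset]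
          _ ≤ 2^(2^(r*(d+2))) :=
              Nat.pow_le_pow_right (by norm_num) (Nat.pow_le_pow_right (by norm_num) hVcard)
      calc ((S'.filter (fun T => vertSet T = V)).card : ℝ) ≤ ((2^(2^(r*(d+2))) : ℕ) : ℝ) :=
            Nat.cast_le.2 hcardle
        _ = (2:ℝ)^(2^(r*(d+2))) := by push_cast; ring
  have step4 : ∑ V ∈ (Finset.univ : Finset (Fin n)).powerset,
      ((2:ℝ)^(2^(r*(d+2)))) * p^(V.card + 1) = ((2:ℝ)^(2^(r*(d+2)))) * p * (1+p)^n := by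
    have hsum : ∑ V ∈ (Finset.univ : Finset (Fin n)).powerset, p^V.card = (p+1)^n := by
      have h := sum_pow_powerset (Finset.univ : Finset (Fin n)) p 1
      simp only [one_pow, mul_one] at h
      rw [h, Finset.card_univ, Fintype.card_fin]
    calc ∑ V ∈ (Finset.univ : Finset (Fin n)).powerset, ((2:ℝ)^(2^(r*(d+2)))) * p^(V.card + 1)
        = ((2:ℝ)^(2^(r*(d+2)))) * p * ∑ V ∈ (Finset.univ : Finset (Fin n)).powerset, p^V.card := by
          rw [Finset.mul_sum]
          exact Finset.sum_congr rfl fun V _ => by rw [pow_succ]; ring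
      _ = ((2:ℝ)^(2^(r*(d+2)))) * p * (1+p)^n := by rw [hsum, add_comm p 1]
  calc ∑ T ∈ S', p^(facesSet d T).card ≤ ∑ T ∈ S', p^((vertSet T).card + 1) := step1
    _ = _ := step2
    _ ≤ ∑ V ∈ (Finset.univ : Finset (Fin n)).powerset, ((2:ℝ)^(2^(r*(d+2)))) * p^(V.card + 1) :=
        Finset.sum_le_sum step3
    _ = _ := step4

lemma err_nonneg (n d r : ℕ) (p : ℝ) (hp0 : 0 ≤ p) :
    0 ≤ ∑ T ∈ ((cand n d).powersetCard r).filter (fun T => ¬ genPred d T),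
        p^(facesSet d T).card :=
  Finset.sum_nonneg fun T _ => pow_nonneg hp0 _

lemma S_tendsto (d r : ℕ) (hd : 1 ≤ d) (c : ℝ) (hc : 0 < c) :
    Tendsto (fun n : ℕ => Ssum n d r (c/n)) atTop
      (𝓝 ((c^(d+2) / ((d+2).factorial : ℝ))^r / (r.factorial : ℝ))) := by
  set K : ℝ := (2:ℝ)^(2^(r*(d+2))) with hK
  have hKpos : 0 < K := by positivity
  have herr : Tendsto (fun n : ℕ =>
      Ssum n d r (c/n) - (((cand n d).card).choose r : ℝ) * (c/n)^(r*(d+2))) atTop (𝓝 0) := by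
    have hgbound : Tendsto (fun n : ℕ => (K * Real.exp c * c) * (1/(n:ℝ))) atTop (𝓝 0) := by
      have := tendsto_one_div_atTop_nhds_zero_nat.const_mul (K * Real.exp c * c)
      simpa using this
    refine squeeze_zero_norm' ?_ hgbound
    filter_upwards [Filter.eventually_ge_atTop (max 1 ⌈c⌉₊)] with n hn
    have hn1 : 1 ≤ n := le_trans (le_max_left _ _) hn
    have hnc : ⌈c⌉₊ ≤ n := le_trans (le_max_right _ _) hn
    have hnR : (1:ℝ) ≤ (n:ℝ) := by exact_mod_cast hn1
    have hn0 : (n:ℝ) ≠ 0 := by linarith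
    set p : ℝ := c / n with hp
    have hp0 : 0 ≤ p := div_nonneg hc.le (by linarith)
    have hpc : c ≤ (n:ℝ) := le_trans (Nat.le_ceil c) (by exact_mod_cast hnc)
    have hp1 : p ≤ 1 := by rw [hp, div_le_one (by linarith)]; exact hpc
    have hdecomp := Ssum_decomp n d r p
    set Err : ℝ := ∑ T ∈ ((cand n d).powersetCard r).filter (fun T => ¬ genPred d T),
        p^(facesSet d T).card with hErr
    set NG : ℝ := (((((cand n d).powersetCard r).filter (fun T => ¬ genPred d T)).card : ℝ))
      with hNG
    have h1 : 0 ≤ Err := err_nonneg n d r p hp0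
    have h2 : NG * p^(r*(d+2)) ≤ Err := nongen_le_err n d r p hp0 hp1
    have h3 : Err ≤ K * p * (1+p)^n := err_le n d r hd p hp0 hp1
    have h4 : 0 ≤ NG * p^(r*(d+2)) := mul_nonneg (Nat.cast_nonneg _) (pow_nonneg hp0 _)
    have hdiff : Ssum n d r p - (((cand n d).card).choose r : ℝ) * p^(r*(d+2))
        = Err - NG * p^(r*(d+2)) := by rw [hdecomp]; ring
    have hexp : (1+p)^n ≤ Real.exp c := by
      have e1 : (1+p) ≤ Real.exp p := by
        have := Real.add_one_le_exp p
        linarith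
      have e2 : (1+p)^n ≤ (Real.exp p)^n := by
        refine pow_le_pow_left₀ (by linarith) e1 n
      have e3 : (Real.exp p)^n = Real.exp ((n:ℝ) * p) := (Real.exp_nat_mul p n).symm
      have e4 : (n:ℝ) * p = c := by rw [hp]; field_simp
      rw [e3, e4] at e2
      exact e2
    have hErrBound : Err ≤ (K * Real.exp c * c) * (1/(n:ℝ)) := by
      calc Err ≤ K * p * (1+p)^n := h3
        _ ≤ K * p * Real.exp c := by
            refine mul_le_mul_of_nonneg_left hexp (mul_nonneg hKpos.le hp0)
        _ = (K * Real.exp c * c) * (1/(n:ℝ)) := by rw [hp]; field_simp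
    rw [hdiff, Real.norm_eq_abs, abs_le]
    constructor
    · linarith
    · linarith
  have hmain := main_tendsto d r c
  have hsum := hmain.add herr
  rw [add_zero] at hsum
  refine hsum.congr fun n => ?_
  ring

end St7

/-- For `d ≥ 2` and `c > 0`, the number `Z_n` of boundaries of
`(d+1)`-simplices in `Y_d(n, c/n)` converges in distribution to `Poisson(λ)`,
`λ = c^{d+2}/(d+2)!`: the point probabilities converge to those of the Poisson law.
In particular `P(Z_n = 0) → e^{-λ} ∈ (0,1)`. -/
theorem statement7 (d : ℕ) (hd : 2 ≤ d) (c : ℝ) (hc : 0 < c) :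
    (∀ k : ℕ, Filter.Tendsto (fun n : ℕ =>
        probY n d (c / n) (fun F => (simplexBoundaries n d F).card = k))
        atTop (nhds (Real.exp (-(c ^ (d + 2) / (Nat.factorial (d + 2) : ℝ))) *
          (c ^ (d + 2) / (Nat.factorial (d + 2) : ℝ)) ^ k / (Nat.factorial k : ℝ)))) ∧
    Filter.Tendsto (fun n : ℕ =>
        probY n d (c / n) (fun F => (simplexBoundaries n d F).card = 0))
      atTop (nhds (Real.exp (-(c ^ (d + 2) / (Nat.factorial (d + 2) : ℝ))))) ∧
    0 < Real.exp (-(c ^ (d + 2) / (Nat.factorial (d + 2) : ℝ))) ∧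
    Real.exp (-(c ^ (d + 2) / (Nat.factorial (d + 2) : ℝ))) < 1 := by
  classical
  have hd1 : 1 ≤ d := le_trans (by norm_num) hd
  set lam : ℝ := c ^ (d + 2) / ((Nat.factorial (d + 2) : ℝ)) with hlam
  have hlampos : 0 < lam :=
    div_pos (pow_pos hc _) (Nat.cast_pos.2 (Nat.factorial_pos _))
  have key : ∀ k : ℕ, Filter.Tendsto (fun n : ℕ =>
      probY n d (c / n) (fun F => (simplexBoundaries n d F).card = k))
      atTop (nhds (Real.exp (-lam) * lam ^ k / (Nat.factorial k : ℝ))) := by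
    intro k
    set L : ℝ := Real.exp (-lam) * lam ^ k / (Nat.factorial k : ℝ) with hL
    set A : ℕ → ℝ := fun s => ∑ j ∈ Finset.range (s+1),
      (-1:ℝ)^j * ((k+j).choose k : ℝ) * (lam^(k+j) / ((k+j).factorial : ℝ)) with hA
    set PS : ℕ → ℕ → ℝ := fun s n => ∑ j ∈ Finset.range (s+1),
      (-1:ℝ)^j * ((k+j).choose k : ℝ) * St7.Ssum n d (k+j) (c/n) with hPSdef
    have hAeq : ∀ s, A s = (lam^k / (k.factorial : ℝ))
        * ∑ j ∈ Finset.range (s+1), (-lam)^j / (j.factorial : ℝ) := by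
      intro s
      rw [hA, Finset.mul_sum]
      refine Finset.sum_congr rfl fun j _ => ?_
      have hfactnat := Nat.choose_mul_factorial_mul_factorial (Nat.le_add_right k j)
      rw [Nat.add_sub_cancel_left] at hfactnat
      have hfact : ((k+j).choose k : ℝ) * (k.factorial : ℝ) * (j.factorial : ℝ)
          = ((k+j).factorial : ℝ) := by exact_mod_cast congrArg (fun x : ℕ => (x:ℝ)) hfactnat
      have hfk : ((k.factorial : ℕ) : ℝ) ≠ 0 := Nat.cast_ne_zero.2 (Nat.factorial_ne_zero _)
      have hfj : ((j.factorial : ℕ) : ℝ) ≠ 0 := Nat.cast_ne_zero.2 (Nat.factorial_ne_zero _)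
      have hfkj : (((k+j).factorial : ℕ) : ℝ) ≠ 0 := Nat.cast_ne_zero.2 (Nat.factorial_ne_zero _)
      have hck : (((k+j).choose k : ℕ) : ℝ) ≠ 0 :=
        Nat.cast_ne_zero.2 (Nat.choose_pos (Nat.le_add_right k j)).ne'
      rw [← hfact, neg_pow lam j, pow_add lam k j]
      field_simp
    have hAlim : Tendsto A atTop (nhds L) := by
      have hsum : HasSum (fun j : ℕ => (-lam)^j / (j.factorial : ℝ)) (Real.exp (-lam)) := by
        rw [Real.exp_eq_exp_ℝ]
        exact NormedSpace.expSeries_div_hasSum_exp (-lam)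
      have h1 : Tendsto (fun s : ℕ => ∑ j ∈ Finset.range (s+1), (-lam)^j / (j.factorial:ℝ))
          atTop (nhds (Real.exp (-lam))) :=
        hsum.tendsto_sum_nat.comp (tendsto_add_atTop_nat 1)
      have h2 := h1.const_mul (lam^k / (k.factorial:ℝ))
      have h3 := h2.congr fun s => (hAeq s).symm
      have hLL : lam^k / (k.factorial:ℝ) * Real.exp (-lam) = L := by rw [hL]; ring
      rw [hLL] at h3
      exact h3
    have hPS : ∀ s : ℕ, Tendsto (fun n : ℕ => PS s n) atTop (nhds (A s)) := by
      intro s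
      rw [hA, hPSdef]
      refine tendsto_finset_sum _ fun j _ => ?_
      have := (St7.S_tendsto d (k+j) hd1 c hc).const_mul ((-1:ℝ)^j * ((k+j).choose k : ℝ))
      simpa [mul_assoc, hlam] using this
    rw [Metric.tendsto_atTop]
    intro ε hε
    obtain ⟨s₀, hs₀⟩ := Metric.tendsto_atTop.1 hAlim (ε/2) (half_pos hε)
    set se := 2*s₀ with hsedef
    set so := 2*s₀+1 with hsodef
    have hseE : Even se := even_two_mul s₀
    have hsoO : Odd so := ⟨s₀, by omega⟩
    have hAse := hs₀ se (by omega)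
    have hAso := hs₀ so (by omega)
    obtain ⟨N₁, hN₁⟩ := Metric.tendsto_atTop.1 (hPS se) (ε/2) (half_pos hε)
    obtain ⟨N₂, hN₂⟩ := Metric.tendsto_atTop.1 (hPS so) (ε/2) (half_pos hε)
    refine ⟨max (max N₁ N₂) (max 1 ⌈c⌉₊), fun n hn => ?_⟩
    have hnN₁ : N₁ ≤ n := le_trans (le_trans (le_max_left _ _) (le_max_left _ _)) hn
    have hnN₂ : N₂ ≤ n := le_trans (le_trans (le_max_right _ _) (le_max_left _ _)) hn
    have hn1 : 1 ≤ n := le_trans (le_trans (le_max_left _ _) (le_max_right _ _)) hn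
    have hnc : ⌈c⌉₊ ≤ n := le_trans (le_trans (le_max_right _ _) (le_max_right _ _)) hn
    have hnR : (1:ℝ) ≤ (n:ℝ) := by exact_mod_cast hn1
    have hp0 : 0 ≤ c/(n:ℝ) := div_nonneg hc.le (by linarith)
    have hp1 : c/(n:ℝ) ≤ 1 := by
      rw [div_le_one (by linarith)]
      exact le_trans (Nat.le_ceil c) (by exact_mod_cast hnc)
    have hup := St7.probY_le_even n d k se (c/n) hp0 hp1 hseE
    have hlo := St7.probY_ge_odd n d k so (c/n) hp0 hp1 hsoO
    have hdse := hN₁ n hnN₁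
    have hdso := hN₂ n hnN₂
    rw [Real.dist_eq, abs_lt] at hdse hdso hAse hAso ⊢
    constructor
    · have : PS so n ≤ probY n d (c / ↑n) fun F => (simplexBoundaries n d F).card = k := hlo
      linarith
    · have : (probY n d (c / ↑n) fun F => (simplexBoundaries n d F).card = k) ≤ PS se n := hup
      linarith
  refine ⟨key, ?_, Real.exp_pos _, Real.exp_lt_one_iff.2 (neg_lt_zero.2 hlampos)⟩
  have h0 := key 0
  simpa using h0


end
end

section
/- Let d ≥ 1 and m ≥ 0 be integers, and let L be the (1+md)×(1+md) real symmetric matrix indexed by {o} ∪ {v_j^r : 1 ≤ j ≤ m, 1 ≤ r ≤ d} with entries L_{o,o} = m, L_{o,v_j^r} = L_{v_j^r,o} = 1 for all j, r, L_{v_j^r, v_j^{r'}} = 1 for all j and all r, r' (including the diagonal), and L_{v_j^r, v_{j'}^{r'}} = 0 whenever j ≠ j'. Then dim ker L = 1 + m(d−1), and ‖P e_o‖² = d/(d+m), where P is the orthogonal projection onto ker L and e_o is the standard basis vector at index o. -/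
open Real

/-- Let `L` be the `(1+md)×(1+md)` real symmetric matrix indexed by
`{o} ∪ {v_j^r : j ∈ [m], r ∈ [d]}` with `L_{o,o} = m`, `L_{o,v_j^r} = L_{v_j^r,o} = 1`,
`L_{v_j^r,v_j^{r'}} = 1` and `L_{v_j^r,v_{j'}^{r'}} = 0` for `j ≠ j'`. Then
`dim ker L = 1 + m(d-1)` and `‖P e_o‖² = d/(d+m)`, where `P` is the orthogonal
projection onto `ker L`. -/
theorem statement9 (d m : ℕ) (hd : 1 ≤ d)
    (L : Matrix (Unit ⊕ Fin m × Fin d) (Unit ⊕ Fin m × Fin d) ℝ)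
    (hL : ∀ a b : Unit ⊕ Fin m × Fin d,
      L a b = match a, b with
        | Sum.inl _, Sum.inl _ => (m : ℝ)
        | Sum.inl _, Sum.inr _ => 1
        | Sum.inr _, Sum.inl _ => 1
        | Sum.inr (j, _), Sum.inr (j', _) => if j = j' then 1 else 0) :
    Module.finrank ℝ (LinearMap.ker (Matrix.toEuclideanLin L)) = 1 + m * (d - 1) ∧
    ‖(Submodule.orthogonalProjection (LinearMap.ker (Matrix.toEuclideanLin L))
        (EuclideanSpace.single (Sum.inl ()) (1 : ℝ)) :
      EuclideanSpace ℝ (Unit ⊕ Fin m × Fin d))‖ ^ 2 = (d : ℝ) / ((d : ℝ) + (m : ℝ)) := by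
  classical
  -- membership in the kernel
  have hmem : ∀ x : EuclideanSpace ℝ (Unit ⊕ Fin m × Fin d),
      x ∈ LinearMap.ker (Matrix.toEuclideanLin L) ↔
      ∀ j : Fin m, x (Sum.inl ()) + ∑ r : Fin d, x (Sum.inr (j, r)) = 0 := by
    intro x
    rw [LinearMap.mem_ker, Matrix.toEuclideanLin_apply, WithLp.toLp_eq_zero]
    have h0 : (WithLp.equiv 2 (Unit ⊕ Fin m × Fin d → ℝ))
        (0 : EuclideanSpace ℝ (Unit ⊕ Fin m × Fin d)) = 0 := rfl
    rw [funext_iff]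
    have key : ∀ a, L.mulVec x.ofLp a =
        match a with
        | Sum.inl _ => (m : ℝ) * x (Sum.inl ()) + ∑ j : Fin m, ∑ r : Fin d, x (Sum.inr (j, r))
        | Sum.inr (j, _) => x (Sum.inl ()) + ∑ r : Fin d, x (Sum.inr (j, r)) := by
      intro a
      cases a with
      | inl _ =>
        simp [Matrix.mulVec, dotProduct, hL, Fintype.sum_sum_type,
          Fintype.sum_prod_type]
      | inr p =>
        obtain ⟨j, r⟩ := p
        simp only [Matrix.mulVec, dotProduct, hL, Fintype.sum_sum_type,
          Fintype.sum_prod_type, ite_mul, one_mul, zero_mul]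
        have : ∀ j' : Fin m, ∑ r' : Fin d,
            (if j = j' then x (Sum.inr (j', r')) else 0) =
            (if j = j' then ∑ r' : Fin d, x (Sum.inr (j', r')) else 0) := by
          intro j'; split_ifs <;> simp
        rw [Finset.sum_congr rfl fun j' _ => this j', Finset.sum_ite_eq]
        simp
    constructor
    · intro h j
      have := h (Sum.inr (j, ⟨0, hd⟩))
      rw [key] at this
      simpa using this
    · intro h a
      rw [key]
      cases a with
      | inl _ =>
        have : ∀ j : Fin m, ∑ r : Fin d, x (Sum.inr (j, r)) = -x (Sum.inl ()) := by
          intro j; linarith [h j]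
        simp only [this, Finset.sum_const, Finset.card_univ, Fintype.card_fin,
          nsmul_eq_mul, Pi.zero_apply]
        ring
      | inr p => obtain ⟨j, r⟩ := p; simpa using h j
  -- the family spanning the orthogonal complement of the kernel
  let u : Fin m → EuclideanSpace ℝ (Unit ⊕ Fin m × Fin d) := fun j =>
    (WithLp.equiv 2 ((Unit ⊕ Fin m × Fin d) → ℝ)).symm
    (fun i => match i with
      | Sum.inl _ => 1
      | Sum.inr (j', _) => if j' = j then 1 else 0)
  have hinner : ∀ (j : Fin m) (x : EuclideanSpace ℝ (Unit ⊕ Fin m × Fin d)),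
      (inner ℝ (u j) x : ℝ) = x (Sum.inl ()) + ∑ r : Fin d, x (Sum.inr (j, r)) := by
    intro j x
    simp only [PiLp.inner_apply, RCLike.inner_apply, conj_trivial, u,
      WithLp.equiv_symm_apply, PiLp.toLp_apply, Fintype.sum_sum_type, Fintype.sum_prod_type]
    have : ∀ j' : Fin m, ∑ r' : Fin d,
        x (Sum.inr (j', r')) * (if j' = j then (1:ℝ) else 0) =
        (if j' = j then ∑ r' : Fin d, x (Sum.inr (j', r')) else 0) := by
      intro j'; split_ifs <;> simp
    rw [Finset.sum_congr rfl fun j' _ => this j', Finset.sum_ite_eq']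
    simp
  have hli : LinearIndependent ℝ u := by
    rw [Fintype.linearIndependent_iff]
    intro g hg j
    have := congrArg (EuclideanSpace.projₗ (𝕜 := ℝ) (Sum.inr (j, ⟨0, hd⟩))) hg
    rw [map_sum, map_zero] at this
    simp only [EuclideanSpace.projₗ, PiLp.projₗ, map_smul, LinearMap.coe_mk,
      AddHom.coe_mk, smul_eq_mul, u, WithLp.equiv_symm_apply, PiLp.toLp_apply] at this
    simpa [Finset.sum_ite_eq'] using this
  -- the kernel is the orthogonal complement of the span of u
  have hker : LinearMap.ker (Matrix.toEuclideanLin L) =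
      (Submodule.span ℝ (Set.range u))ᗮ := by
    ext x
    rw [hmem x, Submodule.mem_orthogonal]
    constructor
    · intro h w hw
      induction hw using Submodule.span_induction with
      | mem w hw =>
        obtain ⟨j, rfl⟩ := hw
        rw [hinner j x]; exact h j
      | zero => simp
      | add a b _ _ ha hb => rw [inner_add_left, ha, hb, add_zero]
      | smul c a _ ha => rw [real_inner_smul_left, ha, mul_zero]
    · intro h j
      rw [← hinner j x]
      exact h (u j) (Submodule.subset_span ⟨j, rfl⟩)
  have hdm : (0 : ℝ) < (d : ℝ) + (m : ℝ) := by
    have : (1 : ℝ) ≤ (d : ℝ) := by exact_mod_cast hd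
    positivity
  constructor
  · -- dimension count
    have hW : Module.finrank ℝ (Submodule.span ℝ (Set.range u)) = m := by
      rw [finrank_span_eq_card hli, Fintype.card_fin]
    have htot := Submodule.finrank_add_finrank_orthogonal
      (K := Submodule.span ℝ (Set.range u))
    rw [hW] at htot
    have hcard : Module.finrank ℝ (EuclideanSpace ℝ (Unit ⊕ Fin m × Fin d))
        = 1 + m * d := by
      simp [finrank_euclideanSpace]
    rw [hker]
    obtain ⟨e, rfl⟩ : ∃ e, d = e + 1 := ⟨d - 1, by omega⟩
    rw [hcard] at htot
    have : m * (e + 1) = m * e + m := by ring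
    rw [this] at htot
    simp only [Nat.add_sub_cancel]
    omega
  · -- projection norm
    set v : EuclideanSpace ℝ (Unit ⊕ Fin m × Fin d) :=
      (WithLp.equiv 2 ((Unit ⊕ Fin m × Fin d) → ℝ)).symm
      (fun i => match i with
        | Sum.inl _ => (d : ℝ) / ((d : ℝ) + (m : ℝ))
        | Sum.inr _ => -(1 / ((d : ℝ) + (m : ℝ)))) with hv
    have hvi : ∀ i, v i = match i with
        | Sum.inl _ => (d : ℝ) / ((d : ℝ) + (m : ℝ))
        | Sum.inr _ => -(1 / ((d : ℝ) + (m : ℝ))) := fun i => rfl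
    have hvK : v ∈ LinearMap.ker (Matrix.toEuclideanLin L) := by
      rw [hmem]
      intro j
      simp only [hvi, Finset.sum_const, Finset.card_univ, Fintype.card_fin,
        nsmul_eq_mul]
      field_simp
      ring
    have hproj : (Submodule.orthogonalProjection (LinearMap.ker (Matrix.toEuclideanLin L))
        (EuclideanSpace.single (Sum.inl ()) (1 : ℝ)) :
        EuclideanSpace ℝ (Unit ⊕ Fin m × Fin d)) = v := by
      apply Submodule.eq_starProjection_of_mem_of_inner_eq_zero hvK
      intro w hw
      have hw' := (hmem w).1 hw
      have hsum : ∀ j : Fin m, ∑ r : Fin d, w (Sum.inr (j, r)) =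
          -w (Sum.inl ()) := fun j => by linarith [hw' j]
      simp only [PiLp.inner_apply, RCLike.inner_apply, conj_trivial,
        PiLp.sub_apply, Fintype.sum_sum_type, Fintype.sum_prod_type, hvi,
        EuclideanSpace.single_apply]
      have hconst : ∀ j : Fin m, ∑ r : Fin d,
          w (Sum.inr (j, r)) * ((if Sum.inr (j, r) = (Sum.inl () : Unit ⊕ Fin m × Fin d) then (1:ℝ) else 0)
            - -(1 / ((d : ℝ) + (m : ℝ)))) =
          (1 / ((d : ℝ) + (m : ℝ))) * (-w (Sum.inl ())) := by
        intro j
        have : ∀ r : Fin d,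
            w (Sum.inr (j, r)) * ((if Sum.inr (j, r) = (Sum.inl () : Unit ⊕ Fin m × Fin d) then (1:ℝ) else 0)
              - -(1 / ((d : ℝ) + (m : ℝ)))) =
            (1 / ((d : ℝ) + (m : ℝ))) * w (Sum.inr (j, r)) := by
          intro r; simp [mul_comm]
        rw [Finset.sum_congr rfl fun r _ => this r, ← Finset.mul_sum, hsum j]
      rw [Finset.sum_congr rfl fun j _ => hconst j]
      simp only [Finset.sum_const, Finset.card_univ, Fintype.card_fin,
        nsmul_eq_mul, Fintype.univ_unit, Finset.sum_singleton]
      have h1 : ((if (Sum.inl () : Unit ⊕ Fin m × Fin d) = Sum.inl () then (1:ℝ) else 0)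
          - (d : ℝ) / ((d : ℝ) + (m : ℝ))) = (m : ℝ) / ((d : ℝ) + (m : ℝ)) := by
        rw [if_pos rfl]; field_simp; ring
      field_simp
      rw [if_pos trivial]; ring
    rw [hproj]
    rw [EuclideanSpace.norm_eq]
    rw [Real.sq_sqrt (by positivity)]
    simp only [hvi, Fintype.sum_sum_type, Fintype.sum_prod_type,
      Finset.sum_const, Finset.card_univ, Fintype.card_fin, nsmul_eq_mul,
      Fintype.univ_unit, Finset.sum_singleton, Real.norm_eq_abs, sq_abs,
      Finset.card_singleton, Fintype.card_prod, Nat.cast_mul, Nat.cast_one]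
    field_simp
end

section
/- Fix an integer d ≥ 2 and define φ(t) := (d+1)(1−t)+(1+d t)·ln t for t ∈ (0,1). Then: (i) φ(t) → −∞ as t → 0⁺ and φ(t) → 0 as t → 1⁻; (ii) φ′(t) = (1 − t + d·t·ln t)/t has a unique zero t_ψ in (0,1), and φ attains its unique maximum on (0,1) at t_ψ; (iii) φ has exactly one zero t_d^* in (0,1), with φ(t) < 0 for t ∈ (0, t_d^*) and φ(t) > 0 for t ∈ (t_d^*, 1); and (iv) t_d^* < t_ψ. In particular, t_d^* and hence c_d^* := (−ln t_d^*)/(1−t_d^*)^d are well defined. -/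
open Real Filter Set

/-- Properties of `φ(t) = (d+1)(1-t) + (1+dt)·ln t` on `(0,1)` for `d ≥ 2`:
limits at the endpoints, derivative formula with unique critical point `t_ψ` which is the
unique maximum point, a unique zero `t_d^*` with the stated sign pattern, and `t_d^* < t_ψ`. -/
theorem statement10 (d : ℕ) (hd : 2 ≤ d) :
    let φ : ℝ → ℝ := fun t => ((d : ℝ) + 1) * (1 - t) + (1 + (d : ℝ) * t) * Real.log t
    -- (i) boundary behaviour
    Filter.Tendsto φ (nhdsWithin 0 (Set.Ioi 0)) Filter.atBot ∧
    Filter.Tendsto φ (nhdsWithin 1 (Set.Iio 1)) (nhds 0) ∧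
    -- (ii) derivative and unique critical point, which is the unique maximum point
    (∀ t ∈ Set.Ioo (0 : ℝ) 1,
      HasDerivAt φ ((1 - t + (d : ℝ) * t * Real.log t) / t) t) ∧
    ∃ tψ ∈ Set.Ioo (0 : ℝ) 1,
      (∀ t ∈ Set.Ioo (0 : ℝ) 1,
        (1 - t + (d : ℝ) * t * Real.log t) / t = 0 ↔ t = tψ) ∧
      (∀ t ∈ Set.Ioo (0 : ℝ) 1, t ≠ tψ → φ t < φ tψ) ∧
      -- (iii) unique zero `t_d^*` with sign pattern, and (iv) `t_d^* < t_ψ`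
      ∃ td ∈ Set.Ioo (0 : ℝ) 1,
        φ td = 0 ∧
        (∀ t ∈ Set.Ioo (0 : ℝ) 1, φ t = 0 → t = td) ∧
        (∀ t ∈ Set.Ioo (0 : ℝ) 1, t < td → φ t < 0) ∧
        (∀ t ∈ Set.Ioo (0 : ℝ) 1, td < t → 0 < φ t) ∧
        td < tψ := by
  intro φ
  have hφdef : φ = fun t => ((d : ℝ) + 1) * (1 - t) + (1 + (d : ℝ) * t) * Real.log t := rfl
  have hd2 : (2:ℝ) ≤ (d:ℝ) := by exact_mod_cast hd
  have hd0 : (0:ℝ) < (d:ℝ) := by linarith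
  set ψ : ℝ → ℝ := fun t => 1 - t + (d:ℝ) * t * Real.log t with hψdef
  -- continuity
  have hφc : ∀ t : ℝ, t ≠ 0 → ContinuousAt φ t := by
    intro t ht
    rw [hφdef]
    exact ((continuous_const.mul (continuous_const.sub continuous_id)).continuousAt).add
      (((continuous_const.add (continuous_const.mul continuous_id)).continuousAt).mul
        (Real.continuousAt_log ht))
  have hψc : ∀ t : ℝ, t ≠ 0 → ContinuousAt ψ t := by
    intro t ht
    rw [hψdef]
    exact ((continuous_const.sub continuous_id).continuousAt).add
      (((continuous_const.mul continuous_id).continuousAt).mul (Real.continuousAt_log ht))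
  -- derivative of φ
  have hφ' : ∀ t ∈ Set.Ioo (0:ℝ) 1, HasDerivAt φ (ψ t / t) t := by
    intro t ht
    have ht0 : t ≠ 0 := ne_of_gt ht.1
    have h1 : HasDerivAt (fun t : ℝ => ((d:ℝ)+1) * (1 - t)) (((d:ℝ)+1) * (0 - 1)) t :=
      ((hasDerivAt_const t (1:ℝ)).sub (hasDerivAt_id t)).const_mul _
    have ha : HasDerivAt (fun t : ℝ => 1 + (d:ℝ)*t) (0 + (d:ℝ)*1) t :=
      (hasDerivAt_const t (1:ℝ)).add ((hasDerivAt_id t).const_mul _)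
    have h2 : HasDerivAt (fun t : ℝ => (1 + (d:ℝ)*t) * Real.log t)
        ((0 + (d:ℝ)*1) * Real.log t + (1 + (d:ℝ)*t) * t⁻¹) t :=
      ha.mul (Real.hasDerivAt_log ht0)
    have h3 : HasDerivAt (fun t : ℝ => ((d:ℝ)+1) * (1 - t) + (1 + (d:ℝ)*t) * Real.log t)
        (((d:ℝ)+1) * (0 - 1) + ((0 + (d:ℝ)*1) * Real.log t + (1 + (d:ℝ)*t) * t⁻¹)) t := h1.add h2
    rw [hφdef]
    convert h3 using 1
    rw [hψdef]
    field_simp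
    ring
  -- derivative of ψ
  have hψ' : ∀ t : ℝ, 0 < t → HasDerivAt ψ ((d:ℝ) * Real.log t + ((d:ℝ) - 1)) t := by
    intro t ht
    have h1 : HasDerivAt (fun t : ℝ => 1 - t) (0 - 1) t :=
      (hasDerivAt_const t (1:ℝ)).sub (hasDerivAt_id t)
    have h2 : HasDerivAt (fun t : ℝ => (d:ℝ) * (t * Real.log t)) ((d:ℝ) * (Real.log t + 1)) t :=
      (Real.hasDerivAt_mul_log (ne_of_gt ht)).const_mul _
    have h3 : HasDerivAt (fun t : ℝ => (1 - t) + (d:ℝ) * (t * Real.log t))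
        ((0 - 1) + (d:ℝ) * (Real.log t + 1)) t := h1.add h2
    have heq : ψ = fun t : ℝ => (1 - t) + (d:ℝ) * (t * Real.log t) := by
      rw [hψdef]; funext x; ring
    rw [heq]
    convert h3 using 1
    ring
  -- constants
  set t0 : ℝ := Real.exp (1/(d:ℝ) - 1) with ht0def
  set a : ℝ := Real.exp (-(d:ℝ)) with hadef
  have ha_pos : 0 < a := Real.exp_pos _
  have ht0_pos : 0 < t0 := Real.exp_pos _
  have hd_inv : (0:ℝ) < 1/(d:ℝ) := by positivity
  have ha_lt_t0 : a < t0 := by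
    apply Real.exp_lt_exp.2
    have : (1:ℝ)/(d:ℝ) > 0 := hd_inv
    linarith
  have h1d : (1:ℝ)/(d:ℝ) < 1 := (div_lt_one hd0).2 (by linarith)
  have ht0_lt_one : t0 < 1 := by
    have h := Real.exp_lt_exp.2 (show 1/(d:ℝ) - 1 < 0 by linarith)
    rwa [Real.exp_zero] at h
  have hlogt0 : Real.log t0 = 1/(d:ℝ) - 1 := Real.log_exp _
  have hloga : Real.log a = -(d:ℝ) := Real.log_exp _
  -- ψ positive at a
  have hψa : 0 < ψ a := by
    have hexp : (1:ℝ) + (d:ℝ)^2 < Real.exp (d:ℝ) := by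
      have h5 := Real.sum_le_exp_of_nonneg (le_of_lt hd0) 5
      have hsum : ∑ i ∈ Finset.range 5, (d:ℝ) ^ i / i.factorial
          = 1 + (d:ℝ) + (d:ℝ)^2/2 + (d:ℝ)^3/6 + (d:ℝ)^4/24 := by
        simp [Finset.sum_range_succ, Nat.factorial]
        try ring
      rw [hsum] at h5
      nlinarith [sq_nonneg ((d:ℝ) - 2)]
    have haval : ψ a = 1 - (1 + (d:ℝ)^2) * a := by
      rw [hψdef]; simp only [hloga]; ring
    rw [haval]
    have : (1 + (d:ℝ)^2) * a < 1 := by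
      rw [hadef, Real.exp_neg]
      rw [mul_inv_lt_iff₀ (Real.exp_pos _)]
      simpa using hexp
    linarith
  -- ψ negative at t0
  have hψt0 : ψ t0 < 0 := by
    have hval : ψ t0 = 1 - (d:ℝ) * t0 := by
      rw [hψdef]; simp only [hlogt0]
      field_simp
      ring
    rw [hval]
    have hlogd : 1 - 1/(d:ℝ) < Real.log (d:ℝ) := by
      have h := Real.log_lt_sub_one_of_pos hd_inv (by
        intro h
        rw [div_eq_one_iff_eq (ne_of_gt hd0)] at h
        linarith)
      rw [one_div, Real.log_inv, inv_eq_one_div] at h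
      linarith
    have h2 : (1:ℝ) < (d:ℝ) * t0 := by
      have heq : (d:ℝ) * t0 = Real.exp (Real.log (d:ℝ) + (1/(d:ℝ) - 1)) := by
        rw [Real.exp_add, Real.exp_log hd0, ht0def]
      have h := Real.exp_lt_exp.2 (show (0:ℝ) < Real.log (d:ℝ) + (1/(d:ℝ) - 1) by linarith)
      rw [Real.exp_zero] at h
      linarith [heq ▸ h]
    linarith
  have hψ1 : ψ 1 = 0 := by rw [hψdef]; simp
  -- monotonicity of ψ
  have hψanti : StrictAntiOn ψ (Set.Ioc 0 t0) := by
    apply strictAntiOn_of_deriv_neg (convex_Ioc _ _)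
    · intro x hx
      exact (hψc x (ne_of_gt hx.1)).continuousWithinAt
    · intro x hx
      rw [interior_Ioc] at hx
      rw [(hψ' x hx.1).deriv]
      have hlx : Real.log x < 1/(d:ℝ) - 1 := by
        rw [← hlogt0]; exact Real.log_lt_log hx.1 hx.2
      have hmul := mul_lt_mul_of_pos_left hlx hd0
      have hfs : (d:ℝ) * (1/(d:ℝ) - 1) = 1 - (d:ℝ) := by field_simp
      linarith
  have hψmono : StrictMonoOn ψ (Set.Icc t0 1) := by
    apply strictMonoOn_of_deriv_pos (convex_Icc _ _)
    · intro x hx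
      exact (hψc x (ne_of_gt (lt_of_lt_of_le ht0_pos hx.1))).continuousWithinAt
    · intro x hx
      rw [interior_Icc] at hx
      rw [(hψ' x (lt_trans ht0_pos hx.1)).deriv]
      have hlx : 1/(d:ℝ) - 1 < Real.log x := by
        rw [← hlogt0]; exact Real.log_lt_log ht0_pos hx.1
      have hmul := mul_lt_mul_of_pos_left hlx hd0
      have hfs : (d:ℝ) * (1/(d:ℝ) - 1) = 1 - (d:ℝ) := by field_simp
      linarith
  -- existence of tψ
  obtain ⟨tψ, htψmem, htψ0⟩ : ∃ tψ ∈ Set.Ioo a t0, ψ tψ = 0 := by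
    have hc : ContinuousOn ψ (Set.Icc a t0) := fun x hx =>
      (hψc x (ne_of_gt (lt_of_lt_of_le ha_pos hx.1))).continuousWithinAt
    have := intermediate_value_Ioo' (le_of_lt ha_lt_t0) hc
      (show (0:ℝ) ∈ Set.Ioo (ψ t0) (ψ a) from ⟨hψt0, hψa⟩)
    obtain ⟨tψ, h1, h2⟩ := this
    exact ⟨tψ, h1, h2⟩
  have htψ_pos : 0 < tψ := lt_trans ha_pos htψmem.1
  have htψ_lt_t0 : tψ < t0 := htψmem.2
  have htψ_lt_one : tψ < 1 := lt_trans htψ_lt_t0 ht0_lt_one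
  have htψIoo : tψ ∈ Set.Ioo (0:ℝ) 1 := ⟨htψ_pos, htψ_lt_one⟩
  -- sign of ψ
  have hψ_pos : ∀ t : ℝ, 0 < t → t < tψ → 0 < ψ t := by
    intro t ht1 ht2
    have := hψanti ⟨ht1, le_of_lt (lt_trans ht2 htψ_lt_t0)⟩ ⟨htψ_pos, le_of_lt htψ_lt_t0⟩ ht2
    rw [htψ0] at this; exact this
  have hψ_neg : ∀ t : ℝ, tψ < t → t < 1 → ψ t < 0 := by
    intro t ht1 ht2
    rcases le_or_gt t t0 with h | h
    · have := hψanti ⟨htψ_pos, le_of_lt htψ_lt_t0⟩ ⟨lt_trans htψ_pos ht1, h⟩ ht1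
      rw [htψ0] at this; exact this
    · have := hψmono ⟨le_of_lt h, le_of_lt ht2⟩ ⟨le_of_lt ht0_lt_one, le_refl 1⟩ ht2
      rw [hψ1] at this; exact this
  -- monotonicity of φ
  have hφmono : StrictMonoOn φ (Set.Ioc 0 tψ) := by
    apply strictMonoOn_of_deriv_pos (convex_Ioc _ _)
    · intro x hx
      exact (hφc x (ne_of_gt hx.1)).continuousWithinAt
    · intro x hx
      rw [interior_Ioc] at hx
      rw [(hφ' x ⟨hx.1, lt_trans hx.2 htψ_lt_one⟩).deriv]
      exact div_pos (hψ_pos x hx.1 hx.2) hx.1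
  have hφanti : StrictAntiOn φ (Set.Icc tψ 1) := by
    apply strictAntiOn_of_deriv_neg (convex_Icc _ _)
    · intro x hx
      exact (hφc x (ne_of_gt (lt_of_lt_of_le htψ_pos hx.1))).continuousWithinAt
    · intro x hx
      rw [interior_Icc] at hx
      rw [(hφ' x ⟨lt_trans htψ_pos hx.1, hx.2⟩).deriv]
      exact div_neg_of_neg_of_pos (hψ_neg x hx.1 hx.2) (lt_trans htψ_pos hx.1)
  have hφ1 : φ 1 = 0 := by rw [hφdef]; simp
  have hφtψ_pos : 0 < φ tψ := by
    have := hφanti ⟨le_refl tψ, le_of_lt htψ_lt_one⟩ ⟨le_of_lt htψ_lt_one, le_refl 1⟩ htψ_lt_one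
    rw [hφ1] at this; exact this
  have hφpos_right : ∀ t : ℝ, tψ ≤ t → t < 1 → 0 < φ t := by
    intro t h1 h2
    have := hφanti ⟨h1, le_of_lt h2⟩ ⟨le_of_lt (lt_of_le_of_lt h1 h2), le_refl 1⟩ h2
    rw [hφ1] at this; exact this
  -- limit at 0
  have hlim0 : Filter.Tendsto φ (nhdsWithin 0 (Set.Ioi 0)) Filter.atBot := by
    rw [hφdef]
    have hmul : Filter.Tendsto (fun t : ℝ => (1 + (d:ℝ)*t) * Real.log t)
        (nhdsWithin 0 (Set.Ioi 0)) Filter.atBot := by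
      apply Filter.Tendsto.pos_mul_atBot (show (0:ℝ) < 1 by norm_num)
      · have hc : Continuous (fun t : ℝ => 1 + (d:ℝ)*t) := by continuity
        have h := (hc.tendsto 0).mono_left (nhdsWithin_le_nhds (s := Set.Ioi (0:ℝ)))
        simpa using h
      · exact Real.tendsto_log_nhdsGT_zero
    have hbound : ∀ᶠ t in nhdsWithin (0:ℝ) (Set.Ioi 0), ((d:ℝ)+1) * (1 - t) ≤ (d:ℝ)+1 := by
      filter_upwards [self_mem_nhdsWithin] with t (ht : t ∈ Set.Ioi (0:ℝ))
      have h0t : (0:ℝ) < t := ht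
      nlinarith
    exact tendsto_atBot_add_left_of_ge' _ ((d:ℝ)+1) hbound hmul
  -- limit at 1
  have hlim1 : Filter.Tendsto φ (nhdsWithin 1 (Set.Iio 1)) (nhds 0) := by
    have := (hφc 1 one_ne_zero).continuousWithinAt (s := Set.Iio 1)
    rw [ContinuousWithinAt, hφ1] at this
    exact this
  -- existence of a negative point
  obtain ⟨b, hbneg, hbmem⟩ : ∃ b : ℝ, φ b < 0 ∧ b ∈ Set.Ioo 0 tψ := by
    have h1 : ∀ᶠ t in nhdsWithin (0:ℝ) (Set.Ioi 0), φ t ≤ -1 :=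
      hlim0.eventually (Filter.eventually_le_atBot (-1))
    have h2 : Set.Ioo (0:ℝ) tψ ∈ nhdsWithin (0:ℝ) (Set.Ioi 0) :=
      Ioo_mem_nhdsGT_of_mem ⟨le_refl 0, htψ_pos⟩
    obtain ⟨b, hb1, hb2⟩ := (h1.and (Filter.eventually_mem_set.2 h2)).exists
    exact ⟨b, by linarith, hb2⟩
  -- existence of td
  obtain ⟨td, htdmem, htd0⟩ : ∃ td ∈ Set.Ioo b tψ, φ td = 0 := by
    have hc : ContinuousOn φ (Set.Icc b tψ) := fun x hx =>
      (hφc x (ne_of_gt (lt_of_lt_of_le hbmem.1 hx.1))).continuousWithinAt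
    have := intermediate_value_Ioo (le_of_lt hbmem.2) hc
      (show (0:ℝ) ∈ Set.Ioo (φ b) (φ tψ) from ⟨hbneg, hφtψ_pos⟩)
    obtain ⟨td, h1, h2⟩ := this
    exact ⟨td, h1, h2⟩
  have htd_pos : 0 < td := lt_trans hbmem.1 htdmem.1
  have htd_lt_tψ : td < tψ := htdmem.2
  have htd_lt_one : td < 1 := lt_trans htd_lt_tψ htψ_lt_one
  -- sign of φ
  have hφneg : ∀ t ∈ Set.Ioo (0:ℝ) 1, t < td → φ t < 0 := by
    intro t ht h
    have := hφmono ⟨ht.1, le_of_lt (lt_trans h htd_lt_tψ)⟩ ⟨htd_pos, le_of_lt htd_lt_tψ⟩ h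
    rw [htd0] at this; exact this
  have hφpos : ∀ t ∈ Set.Ioo (0:ℝ) 1, td < t → 0 < φ t := by
    intro t ht h
    rcases le_or_gt t tψ with h2 | h2
    · have := hφmono ⟨htd_pos, le_of_lt htd_lt_tψ⟩ ⟨ht.1, h2⟩ h
      rw [htd0] at this; exact this
    · exact hφpos_right t (le_of_lt h2) ht.2
  refine ⟨hlim0, hlim1, hφ', tψ, htψIoo, ?_, ?_, td, ⟨htd_pos, htd_lt_one⟩, htd0, ?_, hφneg, hφpos, htd_lt_tψ⟩
  · -- unique critical point
    intro t ht
    constructor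
    · intro h
      have hψt : ψ t = 0 := by
        rcases div_eq_zero_iff.1 h with h' | h'
        · exact h'
        · exact absurd h' (ne_of_gt ht.1)
      rcases lt_trichotomy t tψ with h' | h' | h'
      · exact absurd hψt (ne_of_gt (hψ_pos t ht.1 h'))
      · exact h'
      · exact absurd hψt (ne_of_lt (hψ_neg t h' ht.2))
    · intro h
      subst h
      show ψ t / t = 0
      rw [htψ0, zero_div]
  · -- unique max
    intro t ht hne
    rcases lt_or_gt_of_ne hne with h | h
    · exact hφmono ⟨ht.1, le_of_lt h⟩ ⟨htψ_pos, le_refl tψ⟩ h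
    · exact hφanti ⟨le_refl tψ, le_of_lt htψ_lt_one⟩ ⟨le_of_lt h, le_of_lt ht.2⟩ h
  · -- uniqueness of zero
    intro t ht h
    rcases lt_trichotomy t td with h' | h' | h'
    · exact absurd h (ne_of_lt (hφneg t ht h'))
    · exact h'
    · exact absurd h (ne_of_gt (hφpos t ht h'))
end

section
/- Fix an integer d ≥ 2 and a real c > 0, and define f(t) := t + c·t·(1−t)^d − (c/(d+1))·(1−(1−t)^{d+1}). Consider the maximum of f(t) over the (finite, nonempty) set {t ∈ [0,1] : t = e^{−c(1−t)^d}}. Then: (i) if c < c_d^*, this maximum is attained at t = 1 and equals 1 − c/(d+1); (ii) if c ≥ c_d^*, the equation t = e^{−c(1−t)^d} has roots in (0,1), and the maximum is attained at its smallest root t_c in (0,1). -/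
open Real Set

noncomputable def sPhi (d : ℕ) (t : ℝ) : ℝ := ((d:ℝ)+1)*(1-t) + (1+(d:ℝ)*t)*Real.log t
noncomputable def sP (d : ℕ) (t : ℝ) : ℝ := (d:ℝ)*Real.log t + t⁻¹ - 1
noncomputable def sPsi (d : ℕ) (t : ℝ) : ℝ := 1 - t + (d:ℝ)*t*Real.log t

lemma hasDerivAt_sPhi (d : ℕ) {t : ℝ} (ht : 0 < t) :
    HasDerivAt (sPhi d) (sP d t) t := by
  have hlog : HasDerivAt Real.log t⁻¹ t := Real.hasDerivAt_log ht.ne'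
  have h1 : HasDerivAt (fun t : ℝ => ((d:ℝ)+1)*(1-t)) (((d:ℝ)+1)*(-1)) t :=
    ((hasDerivAt_id t).const_sub 1).const_mul _
  have h2a : HasDerivAt (fun t : ℝ => 1+(d:ℝ)*t) ((d:ℝ)) t := by
    simpa using ((hasDerivAt_id t).const_mul (d:ℝ)).const_add 1
  have h2 := h2a.mul hlog
  have := h1.add h2
  refine this.congr_deriv ?_
  simp only [sP]
  linear_combination (d:ℝ) * mul_inv_cancel₀ ht.ne'

lemma hasDerivAt_sPsi (d : ℕ) {t : ℝ} (ht : 0 < t) :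
    HasDerivAt (sPsi d) ((d:ℝ)*Real.log t + (d:ℝ) - 1) t := by
  have hlog : HasDerivAt Real.log t⁻¹ t := Real.hasDerivAt_log ht.ne'
  have h1 : HasDerivAt (fun t : ℝ => 1 - t) (-1) t := (hasDerivAt_id t).const_sub 1
  have h2a : HasDerivAt (fun t : ℝ => (d:ℝ)*t) ((d:ℝ)) t := by
    simpa using (hasDerivAt_id t).const_mul (d:ℝ)
  have h2 := h2a.mul hlog
  have := h1.add h2
  refine this.congr_deriv ?_
  rw [mul_assoc, mul_inv_cancel₀ ht.ne']
  ring

lemma sP_one (d : ℕ) : sP d 1 = 0 := by simp [sP]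

lemma hasDerivAt_sP (d : ℕ) {t : ℝ} (ht : 0 < t) :
    HasDerivAt (sP d) ((d:ℝ)*t⁻¹ - (t^2)⁻¹) t := by
  have hlog : HasDerivAt Real.log t⁻¹ t := Real.hasDerivAt_log ht.ne'
  have h1 := hlog.const_mul (d:ℝ)
  have h2 : HasDerivAt (fun t : ℝ => t⁻¹) (-(t^2)⁻¹) t := hasDerivAt_inv ht.ne'
  have := (h1.add h2).sub_const 1
  refine this.congr_deriv ?_
  ring

lemma sP_pattern (d : ℕ) (hd : 2 ≤ d) {a b : ℝ} (ha : 0 < a) (hab : a < b) (hb : b < 1)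
    (hPa : sP d a ≤ 0) : sP d b < 0 := by
  have hD : (2:ℝ) ≤ (d:ℝ) := by exact_mod_cast hd
  have hD0 : (0:ℝ) < (d:ℝ) := by linarith
  have hinv1 : ((d:ℝ))⁻¹ < 1 := by
    rw [inv_lt_one_iff₀]; right; linarith
  have hinv0 : (0:ℝ) < ((d:ℝ))⁻¹ := by positivity
  rcases le_or_gt b ((d:ℝ))⁻¹ with hble | hbgt
  · -- strict anti on Ioc 0 (1/d)
    have hanti : StrictAntiOn (sP d) (Ioc 0 ((d:ℝ))⁻¹) := by
      apply strictAntiOn_of_deriv_neg (convex_Ioc _ _)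
      · intro x hx
        exact ((hasDerivAt_sP d hx.1).differentiableAt).continuousAt.continuousWithinAt
      · intro x hx
        rw [interior_Ioc] at hx
        rw [(hasDerivAt_sP d hx.1).deriv]
        have hx0 := hx.1
        have hxd : (d:ℝ)*x < 1 := by
          have := hx.2
          calc (d:ℝ)*x < (d:ℝ)*((d:ℝ))⁻¹ := by
                exact mul_lt_mul_of_pos_left this hD0
            _ = 1 := mul_inv_cancel₀ hD0.ne'
        have : (d:ℝ)*x⁻¹ - (x^2)⁻¹ = ((d:ℝ)*x - 1)/x^2 := by field_simp
        rw [this]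
        apply div_neg_of_neg_of_pos (by linarith) (by positivity)
    have := hanti ⟨ha, le_of_lt (lt_of_lt_of_le hab hble)⟩ ⟨lt_trans ha hab, hble⟩ hab
    linarith
  · -- strict mono on Icc (1/d) 1, sP 1 = 0
    have hmono : StrictMonoOn (sP d) (Icc ((d:ℝ))⁻¹ 1) := by
      apply strictMonoOn_of_deriv_pos (convex_Icc _ _)
      · intro x hx
        have hx0 : 0 < x := lt_of_lt_of_le hinv0 hx.1
        exact ((hasDerivAt_sP d hx0).differentiableAt).continuousAt.continuousWithinAt
      · intro x hx
        rw [interior_Icc] at hx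
        have hx0 : 0 < x := lt_trans hinv0 hx.1
        rw [(hasDerivAt_sP d hx0).deriv]
        have hxd : 1 < (d:ℝ)*x := by
          have := hx.1
          calc (1:ℝ) = (d:ℝ)*((d:ℝ))⁻¹ := (mul_inv_cancel₀ hD0.ne').symm
            _ < (d:ℝ)*x := mul_lt_mul_of_pos_left this hD0
        have : (d:ℝ)*x⁻¹ - (x^2)⁻¹ = ((d:ℝ)*x - 1)/x^2 := by field_simp
        rw [this]
        exact div_pos (by linarith) (by positivity)
    have := hmono ⟨le_of_lt hbgt, le_of_lt hb⟩ ⟨le_of_lt hinv1, le_refl 1⟩ hb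
    rw [sP_one] at this
    exact this

lemma sPhi_one (d : ℕ) : sPhi d 1 = 0 := by simp [sPhi]

lemma sPhi_contMVT (d : ℕ) {a b : ℝ} (ha : 0 < a) (hab : a < b) :
    ∃ ξ ∈ Ioo a b, deriv (sPhi d) ξ = (sPhi d b - sPhi d a)/(b - a) := by
  apply exists_deriv_eq_slope (sPhi d) hab
  · intro x hx
    exact ((hasDerivAt_sPhi d (lt_of_lt_of_le ha hx.1)).differentiableAt).continuousAt.continuousWithinAt
  · intro x hx
    exact ((hasDerivAt_sPhi d (lt_trans ha hx.1)).differentiableAt).differentiableWithinAt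

/-- Φ > 0 on (td, 1) -/
lemma sPhi_pos (d : ℕ) (hd : 2 ≤ d) {td t : ℝ} (htd : td ∈ Ioo (0:ℝ) 1)
    (hroot : sPhi d td = 0) (h1 : td < t) (h2 : t < 1) : 0 < sPhi d t := by
  by_contra hle
  push_neg at hle
  obtain ⟨ξ₁, hξ₁, hs₁⟩ := sPhi_contMVT d htd.1 h1
  obtain ⟨ξ₂, hξ₂, hs₂⟩ := sPhi_contMVT d (lt_trans htd.1 h1) h2
  rw [hroot] at hs₁
  rw [sPhi_one] at hs₂
  have hd₁ : deriv (sPhi d) ξ₁ = sP d ξ₁ := (hasDerivAt_sPhi d (lt_trans htd.1 hξ₁.1)).deriv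
  have hd₂ : deriv (sPhi d) ξ₂ = sP d ξ₂ := (hasDerivAt_sPhi d (by linarith [hξ₂.1, htd.1, hξ₁.2] : (0:ℝ) < ξ₂)).deriv
  have hP1 : sP d ξ₁ ≤ 0 := by
    rw [← hd₁, hs₁]
    apply div_nonpos_of_nonpos_of_nonneg (by linarith) (by linarith)
  have hP2 : 0 ≤ sP d ξ₂ := by
    rw [← hd₂, hs₂]
    apply div_nonneg (by linarith) (by linarith [hξ₂.1])
  have := sP_pattern d hd (lt_trans htd.1 hξ₁.1) (lt_trans hξ₁.2 hξ₂.1) hξ₂.2 hP1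
  linarith

/-- Φ < 0 on (0, td) -/
lemma sPhi_neg (d : ℕ) (hd : 2 ≤ d) {td t : ℝ} (htd : td ∈ Ioo (0:ℝ) 1)
    (hroot : sPhi d td = 0) (h1 : 0 < t) (h2 : t < td) : sPhi d t < 0 := by
  by_contra hle
  push_neg at hle
  obtain ⟨ξ₁, hξ₁, hs₁⟩ := sPhi_contMVT d h1 h2
  obtain ⟨ξ₂, hξ₂, hs₂⟩ := sPhi_contMVT d htd.1 htd.2
  rw [hroot] at hs₁ hs₂
  rw [sPhi_one] at hs₂
  have hd₁ : deriv (sPhi d) ξ₁ = sP d ξ₁ := (hasDerivAt_sPhi d (lt_trans h1 hξ₁.1)).deriv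
  have hd₂ : deriv (sPhi d) ξ₂ = sP d ξ₂ := (hasDerivAt_sPhi d (lt_trans htd.1 hξ₂.1)).deriv
  have hP1 : sP d ξ₁ ≤ 0 := by
    rw [← hd₁, hs₁]
    apply div_nonpos_of_nonpos_of_nonneg (by linarith) (by linarith)
  have hP2 : sP d ξ₂ = 0 := by
    rw [← hd₂, hs₂]; simp
  have := sP_pattern d hd (lt_trans h1 hξ₁.1) (lt_trans hξ₁.2 hξ₂.1) hξ₂.2 hP1
  linarith


lemma log_le_div_e {x : ℝ} (hx : 0 < x) : Real.log x ≤ x / Real.exp 1 := by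
  have he : (0:ℝ) < Real.exp 1 := Real.exp_pos 1
  have h := Real.log_le_sub_one_of_pos (x := x / Real.exp 1) (by positivity)
  rw [Real.log_div hx.ne' he.ne', Real.log_exp] at h
  linarith

lemma sPhi_dsq_pos (d : ℕ) (hd : 2 ≤ d) : 0 < sPhi d (((d:ℝ)^2)⁻¹) := by
  have hD : (2:ℝ) ≤ (d:ℝ) := by exact_mod_cast hd
  have hD0 : (0:ℝ) < (d:ℝ) := by linarith
  set D := (d:ℝ)
  have hlog : Real.log ((D^2)⁻¹) = -(2*Real.log D) := by
    rw [Real.log_inv, Real.log_pow]; push_cast; ring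
  have hL0 : 0 ≤ Real.log D := Real.log_nonneg (by linarith)
  have hLe : Real.log D ≤ D / Real.exp 1 := log_le_div_e hD0
  have he : (2.7182818283:ℝ) < Real.exp 1 := Real.exp_one_gt_d9
  have hLe' : Real.log D ≤ D / (27/10) := by
    refine hLe.trans ?_
    apply div_le_div_of_nonneg_left (by linarith) (by norm_num) (by linarith)
  have key : 0 < D^2 - 1 - 2*D*Real.log D := by
    have hD2 : (4:ℝ) ≤ D^2 := by nlinarith
    have h1 : 2*D*Real.log D ≤ 2*D^2/(27/10) := by
      have h2 := mul_le_mul_of_nonneg_left hLe' (by linarith : (0:ℝ) ≤ 2*D)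
      have e : (2*D)*(D/(27/10)) = 2*D^2/(27/10) := by ring
      linarith [h2, e.le, e.ge]
    linarith
  have hid : sPhi d ((D^2)⁻¹) = (D+1)/D^2 * (D^2 - 1 - 2*D*Real.log D) := by
    unfold sPhi
    rw [hlog]
    field_simp
    ring
  rw [hid]
  exact mul_pos (by positivity) key

lemma td_dsq (d : ℕ) (hd : 2 ≤ d) {td : ℝ} (htd : td ∈ Ioo (0:ℝ) 1)
    (hroot : sPhi d td = 0) : (d:ℝ)^2 * td < 1 := by
  have hD : (2:ℝ) ≤ (d:ℝ) := by exact_mod_cast hd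
  have hD0 : (0:ℝ) < (d:ℝ)^2 := by positivity
  have hx0 : (0:ℝ) < ((d:ℝ)^2)⁻¹ := by positivity
  have hx1 : ((d:ℝ)^2)⁻¹ < 1 := by
    rw [inv_lt_one_iff₀]; right; nlinarith
  rcases lt_trichotomy (((d:ℝ)^2)⁻¹) td with h | h | h
  · have := sPhi_neg d hd htd hroot hx0 h
    have := sPhi_dsq_pos d hd
    linarith
  · have hpos := sPhi_dsq_pos d hd
    rw [h, hroot] at hpos
    linarith
  · calc (d:ℝ)^2 * td < (d:ℝ)^2 * ((d:ℝ)^2)⁻¹ := by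
          exact mul_lt_mul_of_pos_left h hD0
      _ = 1 := mul_inv_cancel₀ hD0.ne'

lemma sPsi_td_pos (d : ℕ) (hd : 2 ≤ d) {td : ℝ} (htd : td ∈ Ioo (0:ℝ) 1)
    (hroot : sPhi d td = 0) : 0 < sPsi d td := by
  have hD : (2:ℝ) ≤ (d:ℝ) := by exact_mod_cast hd
  have hdsq := td_dsq d hd htd hroot
  have h1 : (1+(d:ℝ)*td)*sPsi d td = (1-td)*(1-(d:ℝ)^2*td) := by
    unfold sPsi
    unfold sPhi at hroot
    linear_combination ((d:ℝ)*td)*hroot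
  have hpos : 0 < (1-td)*(1-(d:ℝ)^2*td) :=
    mul_pos (by linarith [htd.2]) (by linarith)
  have hden : 0 < 1+(d:ℝ)*td := by nlinarith [htd.1]
  nlinarith [h1, hpos, hden]

lemma sPsi_one (d : ℕ) : sPsi d 1 = 0 := by simp [sPsi]

lemma sPsi_contMVT (d : ℕ) {a b : ℝ} (ha : 0 < a) (hab : a < b) :
    ∃ ξ ∈ Ioo a b, deriv (sPsi d) ξ = (sPsi d b - sPsi d a)/(b - a) := by
  apply exists_deriv_eq_slope (sPsi d) hab
  · intro x hx
    exact ((hasDerivAt_sPsi d (lt_of_lt_of_le ha hx.1)).differentiableAt).continuousAt.continuousWithinAt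
  · intro x hx
    exact ((hasDerivAt_sPsi d (lt_trans ha hx.1)).differentiableAt).differentiableWithinAt

lemma sPsi_pos (d : ℕ) (hd : 2 ≤ d) {td t : ℝ} (htd : td ∈ Ioo (0:ℝ) 1)
    (hroot : sPhi d td = 0) (ht : t ∈ Ioc (0:ℝ) td) : 0 < sPsi d t := by
  have hD : (2:ℝ) ≤ (d:ℝ) := by exact_mod_cast hd
  have hpsitd := sPsi_td_pos d hd htd hroot
  rcases eq_or_lt_of_le ht.2 with h | h
  · rwa [h]
  by_contra hle
  push_neg at hle
  obtain ⟨ξ₁, hξ₁, hs₁⟩ := sPsi_contMVT d ht.1 h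
  obtain ⟨ξ₂, hξ₂, hs₂⟩ := sPsi_contMVT d htd.1 htd.2
  rw [sPsi_one] at hs₂
  have hd₁ : deriv (sPsi d) ξ₁ = (d:ℝ)*Real.log ξ₁ + (d:ℝ) - 1 :=
    (hasDerivAt_sPsi d (lt_trans ht.1 hξ₁.1)).deriv
  have hd₂ : deriv (sPsi d) ξ₂ = (d:ℝ)*Real.log ξ₂ + (d:ℝ) - 1 :=
    (hasDerivAt_sPsi d (lt_trans htd.1 hξ₂.1)).deriv
  have hP1 : 0 < deriv (sPsi d) ξ₁ := by
    rw [hs₁]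
    apply div_pos (by linarith) (by linarith)
  have hP2 : deriv (sPsi d) ξ₂ < 0 := by
    rw [hs₂]
    apply div_neg_of_neg_of_pos (by linarith) (by linarith [htd.2])
  have hlog : Real.log ξ₁ < Real.log ξ₂ :=
    Real.log_lt_log (lt_trans ht.1 hξ₁.1) (lt_trans hξ₁.2 hξ₂.1)
  rw [hd₁] at hP1
  rw [hd₂] at hP2
  nlinarith

lemma h_strictAnti (d : ℕ) (hd : 2 ≤ d) {td : ℝ} (htd : td ∈ Ioo (0:ℝ) 1)
    (hroot : sPhi d td = 0) :
    StrictAntiOn (fun t => -Real.log t/(1-t)^d) (Ioc (0:ℝ) td) := by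
  have hD : (2:ℝ) ≤ (d:ℝ) := by exact_mod_cast hd
  have hderiv : ∀ x ∈ Ioo (0:ℝ) td, HasDerivAt (fun t => -Real.log t/(1-t)^d)
      ((-x⁻¹*(1-x)^d - (-Real.log x)*((d:ℝ)*(1-x)^(d-1)*(-1)))/((1-x)^d)^2) x := by
    intro x hx
    have hx1 : x < 1 := lt_trans hx.2 htd.2
    have hu : HasDerivAt (fun t : ℝ => -Real.log t) (-x⁻¹) x :=
      (Real.hasDerivAt_log hx.1.ne').neg
    have hbase : HasDerivAt (fun t : ℝ => 1 - t) (-1) x := (hasDerivAt_id x).const_sub 1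
    have hv : HasDerivAt (fun t : ℝ => (1-t)^d) ((d:ℝ)*(1-x)^(d-1)*(-1)) x := hbase.pow d
    exact hu.div hv (pow_pos (by linarith) d).ne'
  apply strictAntiOn_of_deriv_neg (convex_Ioc _ _)
  · intro x hx
    have hx1 : x < 1 := lt_of_le_of_lt hx.2 htd.2
    apply ContinuousAt.continuousWithinAt
    apply ContinuousAt.div
    · exact (Real.continuousAt_log hx.1.ne').neg
    · fun_prop
    · exact (pow_pos (by linarith) d).ne'
  · intro x hx
    rw [interior_Ioc] at hx
    have hx1 : x < 1 := lt_trans hx.2 htd.2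
    rw [(hderiv x hx).deriv]
    have hpsi : 0 < sPsi d x := sPsi_pos d hd htd hroot ⟨hx.1, hx.2.le⟩
    have hpow : (1-x)^d = (1-x)^(d-1)*(1-x) := by
      conv_lhs => rw [show d = (d-1)+1 by omega]
      rw [pow_succ]
    have hnum : -x⁻¹*(1-x)^d - (-Real.log x)*((d:ℝ)*(1-x)^(d-1)*(-1))
        = (1-x)^(d-1) * (-(sPsi d x)/x) := by
      rw [hpow]
      unfold sPsi
      field_simp [hx.1.ne']
      ring
    rw [hnum]
    apply div_neg_of_neg_of_pos
    · apply mul_neg_of_pos_of_neg (pow_pos (by linarith) (d-1))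
      apply div_neg_of_neg_of_pos (by linarith) hx.1
    · exact pow_pos (pow_pos (by linarith) d) 2

/-- For `d ≥ 2`, `c > 0`, and
`f(t) = t + c·t·(1-t)^d - c/(d+1)·(1-(1-t)^{d+1})`, the maximum of `f` over the set
`{t ∈ [0,1] : t = e^{-c(1-t)^d}}` is attained at `t = 1` (with value `1 - c/(d+1)`)
when `c < c_d^*`, and at the smallest root `t_c ∈ (0,1)` of `t = e^{-c(1-t)^d}`
when `c ≥ c_d^*`. Here `t_d^*` is the unique root in `(0,1)` of
`(d+1)(1-t)+(1+dt)ln t = 0` and `c_d^* = (-ln t_d^*)/(1-t_d^*)^d`. -/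
theorem statement13 (d : ℕ) (hd : 2 ≤ d) (c td : ℝ) (hc : 0 < c)
    (htd : td ∈ Set.Ioo (0 : ℝ) 1)
    (hroot : ((d : ℝ) + 1) * (1 - td) + (1 + (d : ℝ) * td) * Real.log td = 0) :
    let f : ℝ → ℝ := fun t =>
      t + c * t * (1 - t) ^ d - c / ((d : ℝ) + 1) * (1 - (1 - t) ^ (d + 1))
    -- (i) the subcritical case: the maximum is attained at `t = 1`
    (c < -Real.log td / (1 - td) ^ d →
      f 1 = 1 - c / ((d : ℝ) + 1) ∧
      ∀ t ∈ Set.Icc (0 : ℝ) 1, t = Real.exp (-c * (1 - t) ^ d) →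
        f t ≤ 1 - c / ((d : ℝ) + 1)) ∧
    -- (ii) the supercritical case: the maximum is attained at the smallest root in `(0,1)`
    (c ≥ -Real.log td / (1 - td) ^ d →
      ∃ tc ∈ Set.Ioo (0 : ℝ) 1,
        tc = Real.exp (-c * (1 - tc) ^ d) ∧
        (∀ t ∈ Set.Ioo (0 : ℝ) 1, t = Real.exp (-c * (1 - t) ^ d) → tc ≤ t) ∧
        ∀ t ∈ Set.Icc (0 : ℝ) 1, t = Real.exp (-c * (1 - t) ^ d) → f t ≤ f tc) := by

  intro f
  have hD : (2:ℝ) ≤ (d:ℝ) := by exact_mod_cast hd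
  have hD1 : (0:ℝ) < (d:ℝ)+1 := by linarith
  have hsPhi_td : sPhi d td = 0 := hroot
  have hAnti := h_strictAnti d hd htd hsPhi_td
  -- value of f on the constraint set
  have hfval : ∀ t : ℝ, Real.log t = -c*(1-t)^d →
      f t = 1 - c/((d:ℝ)+1) - sPhi d t/((d:ℝ)+1) := by
    intro t hlt
    have hX : c*(1-t)^d = -Real.log t := by linarith
    show t + c*t*(1-t)^d - c/((d:ℝ)+1)*(1-(1-t)^(d+1)) = _
    rw [pow_succ]
    unfold sPhi
    field_simp
    linear_combination (((d:ℝ)+1)*t + (1-t)) * hX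
  have hf1 : f 1 = 1 - c/((d:ℝ)+1) := by
    show (1:ℝ) + c*1*(1-1)^d - c/((d:ℝ)+1)*(1-(1-1)^(d+1)) = _
    rw [sub_self, zero_pow (by omega : d ≠ 0), zero_pow (by omega : d+1 ≠ 0)]
    ring
  -- constraint implies H t = c for t < 1
  have hHc : ∀ t : ℝ, 0 < t → t < 1 → t = Real.exp (-c * (1 - t) ^ d) →
      Real.log t = -c*(1-t)^d ∧ -Real.log t/(1-t)^d = c := by
    intro t ht0 ht1 heq
    have hl := congrArg Real.log heq
    rw [Real.log_exp] at hl
    refine ⟨hl, ?_⟩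
    rw [hl]
    have hne : ((1:ℝ)-t)^d ≠ 0 := (pow_pos (by linarith) d).ne'
    field_simp
  constructor
  · -- case (i)
    intro hlt
    refine ⟨hf1, ?_⟩
    intro t ht heq
    have ht0 : 0 < t := by rw [heq]; exact Real.exp_pos _
    rcases eq_or_lt_of_le ht.2 with h1 | h1
    · rw [h1, hf1]
    · obtain ⟨hlog, hH⟩ := hHc t ht0 h1 heq
      have httd : td < t := by
        by_contra hle
        push_neg at hle
        rcases eq_or_lt_of_le hle with h | h
        · rw [h] at hH; linarith
        · have := hAnti ⟨ht0, hle⟩ ⟨htd.1, le_refl td⟩ h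
          simp only at this
          -- -log td/(1-td)^d < -log t/(1-t)^d = c, but c < -log td/(1-td)^d
          linarith
      have hphi : 0 < sPhi d t := sPhi_pos d hd htd hsPhi_td httd h1
      rw [hfval t hlog]
      have : 0 < sPhi d t/((d:ℝ)+1) := div_pos hphi hD1
      linarith
  · -- case (ii)
    intro hge
    have htdne : ((1:ℝ)-td)^d ≠ 0 := (pow_pos (by linarith [htd.2]) d).ne'
    have hgtd : 0 ≤ Real.log td + c*(1-td)^d := by
      rw [ge_iff_le, div_le_iff₀ (pow_pos (by linarith [htd.2]) d)] at hge
      linarith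
    set t₀ := min (td/2) (Real.exp (-(2*c))) with ht₀def
    have ht₀0 : 0 < t₀ := lt_min (by linarith [htd.1]) (Real.exp_pos _)
    have ht₀td : t₀ < td := lt_of_le_of_lt (min_le_left _ _) (by linarith [htd.1])
    have ht₀1 : t₀ < 1 := lt_trans ht₀td htd.2
    set g : ℝ → ℝ := fun t => Real.log t + c*(1-t)^d with hgdef
    have hcont : ContinuousOn g (Icc t₀ td) := by
      intro x hx
      have hx0 : 0 < x := lt_of_lt_of_le ht₀0 hx.1
      exact (((Real.continuousAt_log hx0.ne').add (by fun_prop))).continuousWithinAt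
    have hgt₀ : g t₀ < 0 := by
      have hlog0 : Real.log t₀ ≤ -(2*c) := by
        have h := Real.log_le_log ht₀0 (min_le_right (td/2) (Real.exp (-(2*c))))
        rwa [Real.log_exp] at h
      have hpow : (1-t₀)^d ≤ 1 := pow_le_one₀ (by linarith) (by linarith)
      have : c*(1-t₀)^d ≤ c := by nlinarith
      simp only [hgdef]
      linarith
    have hgtd' : 0 ≤ g td := hgtd
    have hmem : (0:ℝ) ∈ Icc (g t₀) (g td) := ⟨hgt₀.le, hgtd'⟩
    obtain ⟨tc, htc, hgtc⟩ := intermediate_value_Icc ht₀td.le hcont hmem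
    have htc0 : 0 < tc := lt_of_lt_of_le ht₀0 htc.1
    have htctd : tc ≤ td := htc.2
    have htc1 : tc < 1 := lt_of_le_of_lt htctd htd.2
    have hlogtc : Real.log tc = -c*(1-tc)^d := by
      simp only [hgdef] at hgtc
      linarith [hgtc]
    have hexp : tc = Real.exp (-c*(1-tc)^d) := by
      rw [← hlogtc, Real.exp_log htc0]
    obtain ⟨_, hHtc⟩ := hHc tc htc0 htc1 hexp
    have hphitc : sPhi d tc ≤ 0 := by
      rcases eq_or_lt_of_le htctd with h | h
      · rw [h, hsPhi_td]
      · exact (sPhi_neg d hd htd hsPhi_td htc0 h).le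
    have hftc : 1 - c/((d:ℝ)+1) ≤ f tc := by
      rw [hfval tc hlogtc]
      have : sPhi d tc/((d:ℝ)+1) ≤ 0 :=
        div_nonpos_of_nonpos_of_nonneg hphitc hD1.le
      linarith
    refine ⟨tc, ⟨htc0, htc1⟩, hexp, ?_, ?_⟩
    · -- minimality
      intro t ht heq
      by_contra hlt'
      push_neg at hlt'
      obtain ⟨hlog, hH⟩ := hHc t ht.1 ht.2 heq
      have := hAnti ⟨ht.1, le_of_lt (lt_of_lt_of_le hlt' htctd)⟩ ⟨htc0, htctd⟩ hlt'
      simp only at this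
      rw [hH, hHtc] at this
      exact lt_irrefl c this
    · -- maximality
      intro t ht heq
      have ht0 : 0 < t := by rw [heq]; exact Real.exp_pos _
      rcases eq_or_lt_of_le ht.2 with h1 | h1
      · rw [h1, hf1]; exact hftc
      · obtain ⟨hlog, hH⟩ := hHc t ht0 h1 heq
        rcases le_or_gt t td with hle | hgt
        · rcases lt_trichotomy t tc with h | h | h
          · exfalso
            have := hAnti ⟨ht0, hle⟩ ⟨htc0, htctd⟩ h
            simp only at this
            rw [hH, hHtc] at this
            exact lt_irrefl c this
          · rw [h]
          · exfalso
            have := hAnti ⟨htc0, htctd⟩ ⟨ht0, hle⟩ h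
            simp only at this
            rw [hH, hHtc] at this
            exact lt_irrefl c this
        · have hphi : 0 < sPhi d t := sPhi_pos d hd htd hsPhi_td hgt h1
          rw [hfval t hlog]
          have : 0 < sPhi d t/((d:ℝ)+1) := div_pos hphi hD1
          linarith
end

section
/- Fix an integer d ≥ 2 and a real c > 0. The equation t = e^{−c(1−t)^d} has a root in the open interval (0, t_d^*) if and only if c > c_d^*; moreover, when c > c_d^* this root is unique in (0, t_d^*) and is the smallest root of t = e^{−c(1−t)^d} in (0,1). -/
open Real Set

noncomputable def hF (d : ℕ) (t : ℝ) : ℝ :=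
  ((d : ℝ) + 1) * (1 - t) + (1 + (d : ℝ) * t) * Real.log t

noncomputable def GF (d : ℕ) (t : ℝ) : ℝ := (1 - t) + (d : ℝ) * (t * Real.log t)

noncomputable def psiF (d : ℕ) (t : ℝ) : ℝ := -Real.log t / (1 - t) ^ d

lemma Kpos (d : ℕ) (hd : 2 ≤ d) : 2 * Real.log d < (d : ℝ) - 1 / d := by
  have hd2 : (2 : ℝ) ≤ d := by exact_mod_cast hd
  have hd0 : (0 : ℝ) < d := by linarith
  have h1 : Real.log d ≤ (d : ℝ) / Real.exp 1 := log_le_div_e hd0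
  have he : (2.7182818283 : ℝ) < Real.exp 1 := Real.exp_one_gt_d9
  have he0 : (0 : ℝ) < Real.exp 1 := by linarith
  rw [le_div_iff₀ he0] at h1
  -- need 2 * log d < d - 1/d, i.e. 2 * log d * d < d^2 - 1
  rw [show (d:ℝ) - 1/d = (d^2 - 1)/d by field_simp, lt_div_iff₀ hd0]
  nlinarith [sq_nonneg ((d:ℝ) - 2), mul_pos hd0 hd0, Real.log_nonneg (by linarith : (1:ℝ) ≤ d)]

lemma hF_hasDerivAt (d : ℕ) {x : ℝ} (hx : 0 < x) :
    HasDerivAt (hF d) (-((d : ℝ) + 1) + ((d : ℝ) * Real.log x + (1 + (d : ℝ) * x) * x⁻¹)) x := by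
  have h1 : HasDerivAt (fun t : ℝ => ((d : ℝ) + 1) * (1 - t)) (-((d : ℝ) + 1)) x := by
    simpa using (((hasDerivAt_id x).const_sub 1).const_mul ((d : ℝ) + 1))
  have h2 : HasDerivAt (fun t : ℝ => 1 + (d : ℝ) * t) ((d : ℝ)) x := by
    simpa using (((hasDerivAt_id x).const_mul (d : ℝ)).const_add 1)
  have h3 : HasDerivAt Real.log x⁻¹ x := Real.hasDerivAt_log (ne_of_gt hx)
  have h4 := h2.mul h3
  have H := h1.add h4
  unfold hF
  exact H

lemma hF_one (d : ℕ) : hF d 1 = 0 := by simp [hF]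

lemma hF_inv_sq_pos (d : ℕ) (hd : 2 ≤ d) : 0 < hF d (1 / (d : ℝ) ^ 2) := by
  have hd2 : (2 : ℝ) ≤ d := by exact_mod_cast hd
  have hd0 : (0 : ℝ) < d := by linarith
  have hK := Kpos d hd
  have hlog : Real.log (1 / (d : ℝ) ^ 2) = -(2 * Real.log d) := by
    rw [one_div, Real.log_inv, Real.log_pow]; push_cast; ring
  rw [hF, hlog]
  have h1 : (1 + (d:ℝ) * (1/(d:ℝ)^2)) = 1 + 1/d := by field_simp
  rw [h1]
  have key : ((d:ℝ) + 1) * (1 - 1/(d:ℝ)^2) = (1 + 1/d) * ((d:ℝ) - 1/d) := by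
    field_simp
  have hpos : (0:ℝ) < 1 + 1/d := by positivity
  nlinarith [mul_lt_mul_of_pos_left hK hpos]

lemma hF_one' (d : ℕ) : hF d 1 = 0 := by simp [hF]

lemma hF_contOn (d : ℕ) {s : Set ℝ} (hs : ∀ x ∈ s, x ≠ 0) : ContinuousOn (hF d) s := by
  unfold hF
  exact (continuousOn_const.mul (continuousOn_const.sub continuousOn_id)).add
    ((continuousOn_const.add (continuousOn_const.mul continuousOn_id)).mul
      (Real.continuousOn_log.mono (fun x hx => hs x hx)))

-- min point in the open interval forces positive value
lemma key_min (d : ℕ) (hd : 2 ≤ d) {x : ℝ} (hx1 : 1 / (d : ℝ) ^ 2 < x) (hx2 : x < 1)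
    (hmin : IsMinOn (hF d) (Set.Icc (1 / (d : ℝ) ^ 2) 1) x) : 0 < hF d x := by
  have hd2 : (2 : ℝ) ≤ d := by exact_mod_cast hd
  have hd0 : (0 : ℝ) < d := by linarith
  have hx0 : 0 < x := lt_trans (by positivity) hx1
  have hloc : IsLocalMin (hF d) x := hmin.isLocalMin (Icc_mem_nhds hx1 hx2)
  have hder := hF_hasDerivAt d hx0
  have h0 : -((d : ℝ) + 1) + ((d : ℝ) * Real.log x + (1 + (d : ℝ) * x) * x⁻¹) = 0 := by
    rw [← hder.deriv]; exact hloc.deriv_eq_zero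
  have hlog : Real.log x = (x - 1) / ((d : ℝ) * x) := by
    field_simp at h0 ⊢
    nlinarith [h0]
  have hval : hF d x = (1 - x) * ((d : ℝ) ^ 2 * x - 1) / ((d : ℝ) * x) := by
    rw [hF, hlog]; field_simp; ring
  rw [hval]
  have h1 : (0:ℝ) < 1 - x := by linarith
  have h2 : (0:ℝ) < (d:ℝ)^2 * x - 1 := by
    have : (1:ℝ) < (d:ℝ)^2 * x := by
      rw [div_lt_iff₀ (by positivity)] at hx1; linarith [hx1]
    linarith
  positivity

lemma td_lt (d : ℕ) (hd : 2 ≤ d) {td : ℝ} (htd0 : 0 < td) (htd1 : td < 1)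
    (hroot : hF d td = 0) : td < 1 / (d : ℝ) ^ 2 := by
  by_contra hcon
  push_neg at hcon
  have hd2 : (2 : ℝ) ≤ d := by exact_mod_cast hd
  have hd0 : (0 : ℝ) < d := by linarith
  set a : ℝ := 1 / (d : ℝ) ^ 2 with ha
  have ha0 : 0 < a := by positivity
  have ha1 : a < 1 := by
    rw [ha, div_lt_one (by positivity)]; nlinarith
  have hcont : ContinuousOn (hF d) (Set.Icc a 1) :=
    hF_contOn d (fun x hx => ne_of_gt (lt_of_lt_of_le ha0 hx.1))
  obtain ⟨m, hm, hmin⟩ := (isCompact_Icc).exists_isMinOn ⟨a, le_refl a, le_of_lt ha1⟩ hcont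
  have htdIcc : td ∈ Set.Icc a 1 := ⟨hcon, le_of_lt htd1⟩
  have hmle : hF d m ≤ 0 := by rw [← hroot]; exact hmin htdIcc
  -- case on m
  rcases eq_or_lt_of_le hm.1 with hma | hma
  · -- m = a
    rw [← hma] at hmle
    exact absurd (hF_inv_sq_pos d hd) (by rw [← ha]; linarith)
  rcases eq_or_lt_of_le hm.2 with hm1 | hm1
  · -- m = 1 : min value is 0, so td is also a min point
    have hminval : hF d m = 0 := by rw [hm1, hF_one']
    have htdmin : IsMinOn (hF d) (Set.Icc a 1) td := by
      intro y hy
      have := hmin hy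
      simp only [Set.mem_setOf_eq] at this ⊢
      rw [hroot]; rw [hminval] at this; exact this
    rcases eq_or_lt_of_le htdIcc.1 with hta | hta
    · exact absurd (hF_inv_sq_pos d hd) (by rw [← ha, hta, hroot]; exact lt_irrefl 0)
    · have := key_min d hd hta htd1 htdmin
      rw [hroot] at this; exact lt_irrefl 0 this
  · have := key_min d hd hma hm1 hmin
    linarith

lemma GF_hasDerivAt (d : ℕ) {x : ℝ} (hx : 0 < x) :
    HasDerivAt (GF d) (-1 + (d : ℝ) * (Real.log x + 1)) x := by
  have h1 : HasDerivAt (fun t : ℝ => 1 - t) (-1) x := (hasDerivAt_id x).const_sub 1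
  have h2 : HasDerivAt (fun t : ℝ => t * Real.log t) (Real.log x + 1) x := by
    have := (hasDerivAt_id x).mul (Real.hasDerivAt_log (ne_of_gt hx))
    exact this.congr_deriv (by
      field_simp; simp only [id_eq]; ring)
  have := h1.add (h2.const_mul (d : ℝ))
  unfold GF
  exact this

lemma GF_inv_sq_pos (d : ℕ) (hd : 2 ≤ d) : 0 < GF d (1 / (d : ℝ) ^ 2) := by
  have hd2 : (2 : ℝ) ≤ d := by exact_mod_cast hd
  have hd0 : (0 : ℝ) < d := by linarith
  have hK := Kpos d hd
  have hlog : Real.log (1 / (d : ℝ) ^ 2) = -(2 * Real.log d) := by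
    rw [one_div, Real.log_inv, Real.log_pow]; push_cast; ring
  rw [GF, hlog]
  have h1 : (d:ℝ) * ((1/(d:ℝ)^2) * -(2 * Real.log d)) = -(2 * Real.log d / d) := by
    field_simp
  rw [h1]
  have e1 : ((d:ℝ) - 1/d)/d = 1 - 1/(d:ℝ)^2 := by field_simp
  have h2 : 2*Real.log d/(d:ℝ) < ((d:ℝ) - 1/d)/d := by gcongr
  rw [e1] at h2
  linarith

lemma GF_antitone (d : ℕ) (hd : 2 ≤ d) :
    AntitoneOn (GF d) (Set.Ioc (0:ℝ) (1 / (d : ℝ) ^ 2)) := by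
  have hd2 : (2 : ℝ) ≤ d := by exact_mod_cast hd
  have hd0 : (0 : ℝ) < d := by linarith
  have hl2 : (0.6931471803 : ℝ) < Real.log 2 := Real.log_two_gt_d9
  have hint : interior (Set.Ioc (0:ℝ) (1 / (d : ℝ) ^ 2)) = Set.Ioo (0:ℝ) (1/(d:ℝ)^2) :=
    interior_Ioc
  apply antitoneOn_of_deriv_nonpos (convex_Ioc _ _)
  · unfold GF
    exact (continuousOn_const.sub continuousOn_id).add (continuousOn_const.mul
      (continuousOn_id.mul (Real.continuousOn_log.mono (fun x hx => ne_of_gt hx.1))))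
  · rw [hint]
    intro x hx
    exact ((GF_hasDerivAt d hx.1).differentiableAt).differentiableWithinAt
  · rw [hint]
    intro x hx
    rw [(GF_hasDerivAt d hx.1).deriv]
    -- need -1 + d (log x + 1) ≤ 0, i.e. d log x ≤ 1 - d
    have hlx : Real.log x < Real.log (1/(d:ℝ)^2) :=
      Real.log_lt_log hx.1 hx.2
    have hlog : Real.log (1 / (d : ℝ) ^ 2) = -(2 * Real.log d) := by
      rw [one_div, Real.log_inv, Real.log_pow]; push_cast; ring
    rw [hlog] at hlx
    have hld : Real.log 2 ≤ Real.log d := Real.log_le_log (by norm_num) hd2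
    -- d * log x < d * (-(2 log d)) ≤ d * (-(2 log 2)) ≤ -1.38 d ≤ 1 - d
    have h3 : (d:ℝ) * Real.log x < (d:ℝ) * (-(2 * Real.log d)) := by
      apply mul_lt_mul_of_pos_left hlx hd0
    nlinarith [mul_le_mul_of_nonneg_left hld (le_of_lt hd0)]

lemma GF_pos (d : ℕ) (hd : 2 ≤ d) {x : ℝ} (hx0 : 0 < x) (hx1 : x ≤ 1 / (d : ℝ) ^ 2) :
    0 < GF d x := by
  have := GF_antitone d hd ⟨hx0, hx1⟩ ⟨by positivity, le_refl _⟩ hx1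
  exact lt_of_lt_of_le (GF_inv_sq_pos d hd) this

lemma psiF_contOn (d : ℕ) {s : Set ℝ} (hs : ∀ x ∈ s, 0 < x ∧ x < 1) :
    ContinuousOn (psiF d) s := by
  unfold psiF
  apply ContinuousOn.div
  · exact (Real.continuousOn_log.mono (fun x hx => ne_of_gt (hs x hx).1)).neg
  · exact ((continuousOn_const.sub continuousOn_id).pow d)
  · intro x hx
    exact pow_ne_zero d (by linarith [(hs x hx).2])

lemma psiF_hasDerivAt (d : ℕ) (hd : 2 ≤ d) {x : ℝ} (hx0 : 0 < x) (hx1 : x < 1) :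
    HasDerivAt (psiF d)
      ((-x⁻¹ * (1 - x) ^ d - -Real.log x * ((d:ℝ) * (1 - x) ^ (d - 1) * (-1))) / ((1 - x) ^ d) ^ 2)
      x := by
  have h1 : HasDerivAt (fun t : ℝ => -Real.log t) (-x⁻¹) x :=
    (Real.hasDerivAt_log (ne_of_gt hx0)).neg
  have h2 : HasDerivAt (fun t : ℝ => (1 - t) ^ d) ((d:ℝ) * (1 - x) ^ (d - 1) * (-1)) x :=
    ((hasDerivAt_id x).const_sub 1).pow d
  exact h1.div h2 (pow_ne_zero d (by linarith))

lemma psiF_deriv_neg (d : ℕ) (hd : 2 ≤ d) {x : ℝ} (hx0 : 0 < x) (hx1 : x < 1)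
    (hG : 0 < GF d x) : deriv (psiF d) x < 0 := by
  rw [(psiF_hasDerivAt d hd hx0 hx1).deriv]
  apply div_neg_of_neg_of_pos
  · -- numerator < 0
    have hpow : (1 - x) ^ d = (1 - x) ^ (d - 1) * (1 - x) := by
      rw [← pow_succ]; congr 1; omega
    have h1x : (0:ℝ) < 1 - x := by linarith
    have key : -x⁻¹ * (1 - x) ^ d - -Real.log x * ((d:ℝ) * (1 - x) ^ (d - 1) * (-1))
        = (1 - x) ^ (d - 1) * (-(GF d x) / x) := by
      rw [hpow, GF]; field_simp; ring
    rw [key]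
    apply mul_neg_of_pos_of_neg (pow_pos h1x _)
    apply div_neg_of_neg_of_pos (by linarith) hx0
  · exact pow_pos (pow_pos (by linarith) d) 2

lemma psiF_strictAnti (d : ℕ) (hd : 2 ≤ d) {b : ℝ} (hb0 : 0 < b) (hb1 : b < 1)
    (hb2 : b ≤ 1 / (d : ℝ) ^ 2) : StrictAntiOn (psiF d) (Set.Ioc (0:ℝ) b) := by
  apply strictAntiOn_of_deriv_neg (convex_Ioc _ _)
  · exact psiF_contOn d (fun x hx => ⟨hx.1, lt_of_le_of_lt hx.2 hb1⟩)
  · rw [interior_Ioc]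
    intro x hx
    exact psiF_deriv_neg d hd hx.1 (lt_trans hx.2 hb1)
      (GF_pos d hd hx.1 (le_trans (le_of_lt hx.2) hb2))

lemma root_iff (d : ℕ) (c : ℝ) {t : ℝ} (ht0 : 0 < t) (ht1 : t < 1) :
    (t = Real.exp (-c * (1 - t) ^ d)) ↔ psiF d t = c := by
  have hpow : (0:ℝ) < (1 - t) ^ d := pow_pos (by linarith) d
  constructor
  · intro h
    have h2 : Real.log t = -c * (1 - t) ^ d := by
      conv_lhs => rw [h, Real.log_exp]
    rw [psiF, h2]; field_simp
  · intro h
    rw [psiF, div_eq_iff (ne_of_gt hpow)] at h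
    rw [show -c * (1 - t)^d = Real.log t by linarith, Real.exp_log ht0]
/-- For `d ≥ 2` and `c > 0`: the equation `t = e^{-c(1-t)^d}` has a root
in `(0, t_d^*)` iff `c > c_d^*`; moreover for `c > c_d^*` this root is unique in
`(0, t_d^*)` and is the smallest root in `(0,1)`. -/
theorem statement14 (d : ℕ) (hd : 2 ≤ d) (c td : ℝ) (hc : 0 < c)
    (htd : td ∈ Set.Ioo (0 : ℝ) 1)
    (hroot : ((d : ℝ) + 1) * (1 - td) + (1 + (d : ℝ) * td) * Real.log td = 0) :
    ((∃ t ∈ Set.Ioo (0 : ℝ) td, t = Real.exp (-c * (1 - t) ^ d)) ↔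
      c > -Real.log td / (1 - td) ^ d) ∧
    (c > -Real.log td / (1 - td) ^ d →
      ∃ t ∈ Set.Ioo (0 : ℝ) td, t = Real.exp (-c * (1 - t) ^ d) ∧
        (∀ t' ∈ Set.Ioo (0 : ℝ) td, t' = Real.exp (-c * (1 - t') ^ d) → t' = t) ∧
        (∀ t' ∈ Set.Ioo (0 : ℝ) 1, t' = Real.exp (-c * (1 - t') ^ d) → t ≤ t')) := by
  obtain ⟨htd0, htd1⟩ := htd
  have hroot' : hF d td = 0 := hroot
  have hlt : td < 1 / (d : ℝ) ^ 2 := td_lt d hd htd0 htd1 hroot'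
  have hSA : StrictAntiOn (psiF d) (Set.Ioc (0:ℝ) td) :=
    psiF_strictAnti d hd htd0 htd1 (le_of_lt hlt)
  have hCdef : psiF d td = -Real.log td / (1 - td) ^ d := rfl
  -- forward direction of the iff
  have hfwd : (∃ t ∈ Set.Ioo (0 : ℝ) td, t = Real.exp (-c * (1 - t) ^ d)) →
      c > -Real.log td / (1 - td) ^ d := by
    rintro ⟨t, ht, heq⟩
    have hpsit : psiF d t = c := (root_iff d c ht.1 (lt_trans ht.2 htd1)).mp heq
    have := hSA ⟨ht.1, le_of_lt ht.2⟩ ⟨htd0, le_refl td⟩ ht.2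
    rw [hpsit, hCdef] at this
    exact this
  -- main construction for c > c_d^*
  have hmain : c > -Real.log td / (1 - td) ^ d →
      ∃ t ∈ Set.Ioo (0 : ℝ) td, t = Real.exp (-c * (1 - t) ^ d) ∧
        (∀ t' ∈ Set.Ioo (0 : ℝ) td, t' = Real.exp (-c * (1 - t') ^ d) → t' = t) ∧
        (∀ t' ∈ Set.Ioo (0 : ℝ) 1, t' = Real.exp (-c * (1 - t') ^ d) → t ≤ t') := by
    intro hC
    rw [← hCdef] at hC
    set t1 : ℝ := min (td / 2) (Real.exp (-(c + 1))) with ht1def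
    have ht10 : 0 < t1 := lt_min (by linarith) (Real.exp_pos _)
    have ht1td : t1 < td := lt_of_le_of_lt (min_le_left _ _) (by linarith)
    have ht11 : t1 < 1 := lt_trans ht1td htd1
    -- psiF d t1 > c
    have hlogt1 : Real.log t1 ≤ -(c + 1) := by
      have := Real.log_le_log ht10 (min_le_right (td / 2) (Real.exp (-(c + 1))))
      rwa [Real.log_exp] at this
    have hpsit1 : c < psiF d t1 := by
      have hp0 : (0:ℝ) < (1 - t1) ^ d := pow_pos (by linarith) d
      have hp1 : (1 - t1) ^ d ≤ 1 := pow_le_one₀ (by linarith) (by linarith)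
      have h1 : c + 1 ≤ -Real.log t1 := by linarith
      have h2 : -Real.log t1 ≤ -Real.log t1 / (1 - t1) ^ d := by
        rw [le_div_iff₀ hp0]
        exact mul_le_of_le_one_right (by linarith) hp1
      rw [psiF]
      linarith
    -- IVT
    have hcont : ContinuousOn (psiF d) (Set.Icc t1 td) :=
      psiF_contOn d (fun x hx => ⟨lt_of_lt_of_le ht10 hx.1, lt_of_le_of_lt hx.2 htd1⟩)
    have hmem : c ∈ Set.Ioo (psiF d td) (psiF d t1) := ⟨hC, hpsit1⟩
    obtain ⟨t, htmem, hteq⟩ := intermediate_value_Ioo' (le_of_lt ht1td) hcont hmem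
    have ht : t ∈ Set.Ioo (0:ℝ) td := ⟨lt_trans ht10 htmem.1, htmem.2⟩
    have htroot : t = Real.exp (-c * (1 - t) ^ d) :=
      (root_iff d c ht.1 (lt_trans ht.2 htd1)).mpr hteq
    have huniq : ∀ t' ∈ Set.Ioo (0 : ℝ) td, t' = Real.exp (-c * (1 - t') ^ d) → t' = t := by
      intro t' ht' heq'
      have hpsit' : psiF d t' = c := (root_iff d c ht'.1 (lt_trans ht'.2 htd1)).mp heq'
      exact hSA.injOn ⟨ht'.1, le_of_lt ht'.2⟩ ⟨ht.1, le_of_lt ht.2⟩ (by rw [hpsit', hteq])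
    refine ⟨t, ht, htroot, huniq, ?_⟩
    intro t' ht' heq'
    by_cases h : t' < td
    · exact le_of_eq (huniq t' ⟨ht'.1, h⟩ heq').symm
    · push_neg at h
      exact le_trans (le_of_lt ht.2) h
  exact ⟨⟨hfwd, fun hC => (hmain hC).imp (fun t h => ⟨h.1, h.2.1⟩)⟩, hmain⟩
end

section
/- Fix an integer d ≥ 2. For c > c_d^* let t_c denote the smallest root in (0,1) of t = e^{−c(1−t)^d}, and define g_d(c) := c·t_c·(1−t_c)^d + (c/(d+1))·(1−t_c)^{d+1} − (1−t_c). Then g_d is differentiable on (c_d^*, ∞) and g_d′(c) = (1/(d+1))·(1−t_c)^{d+1}. -/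
open Real Set Filter Topology

lemma derivU' (d : ℕ) {t : ℝ} (ht : 0 < t) :
    HasDerivAt (fun s : ℝ => 1 - s + d * s * Real.log s) ((d:ℝ) - 1 + d * Real.log t) t := by
  have h1 : HasDerivAt (fun s : ℝ => (1:ℝ) - s) (0 - 1) t :=
    (hasDerivAt_const t (1:ℝ)).sub (hasDerivAt_id t)
  have h2 : HasDerivAt (fun s : ℝ => s * Real.log s) (1 * Real.log t + t * t⁻¹) t :=
    (hasDerivAt_id t).mul (Real.hasDerivAt_log (ne_of_gt ht))
  have h3 := h1.add ((h2.const_mul (d:ℝ)))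
  have h3' : HasDerivAt (fun s : ℝ => 1 - s + d * s * Real.log s)
      (0 - 1 + d * (1 * Real.log t + t * t⁻¹)) t := by
    simpa [mul_assoc, Pi.add_def] using h3
  convert h3' using 1
  rw [mul_inv_cancel₀ (ne_of_gt ht)]
  ring

lemma mLtOne' (d : ℕ) (hd : 2 ≤ d) : Real.exp ((1 - d) / d) < 1 := by
  have hdpos : (0:ℝ) < d := by positivity
  rw [Real.exp_lt_one_iff]
  apply div_neg_of_neg_of_pos _ hdpos
  have : (2:ℝ) ≤ d := by exact_mod_cast hd
  linarith

lemma uAnti' (d : ℕ) (hd : 2 ≤ d) :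
    AntitoneOn (fun s : ℝ => 1 - s + d * s * Real.log s)
      (Set.Ioc (0:ℝ) (Real.exp ((1 - d) / d))) := by
  have hdpos : (0:ℝ) < d := by positivity
  apply antitoneOn_of_deriv_nonpos (convex_Ioc _ _)
  · exact ContinuousOn.add (by fun_prop)
      (ContinuousOn.mul (by fun_prop) (Real.continuousOn_log.mono (by
        intro x hx; exact ne_of_gt hx.1)))
  · intro x hx
    rw [interior_Ioc] at hx
    exact ((derivU' d hx.1).differentiableAt.differentiableWithinAt)
  · intro x hx
    rw [interior_Ioc] at hx
    rw [(derivU' d hx.1).deriv]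
    have hlog : Real.log x < (1 - d) / d := by
      calc Real.log x < Real.log (Real.exp ((1-d)/d)) := Real.log_lt_log hx.1 hx.2
        _ = (1 - d)/d := Real.log_exp _
    rw [lt_div_iff₀ hdpos] at hlog
    nlinarith

lemma uNegHigh' (d : ℕ) (hd : 2 ≤ d) {t : ℝ} (hm : Real.exp ((1 - d) / d) ≤ t) (ht1 : t < 1) :
    1 - t + d * t * Real.log t < 0 := by
  have hdpos : (0:ℝ) < d := by positivity
  have hmono : StrictMonoOn (fun s : ℝ => 1 - s + d * s * Real.log s)
      (Set.Icc (Real.exp ((1 - d) / d)) 1) := by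
    apply strictMonoOn_of_deriv_pos (convex_Icc _ _)
    · exact ContinuousOn.add (by fun_prop)
        (ContinuousOn.mul (by fun_prop) (Real.continuousOn_log.mono (by
          intro x hx; exact ne_of_gt (lt_of_lt_of_le (Real.exp_pos _) hx.1))))
    · intro x hx
      rw [interior_Icc] at hx
      have hx0 : 0 < x := lt_of_lt_of_le (Real.exp_pos _) hx.1.le
      rw [(derivU' d hx0).deriv]
      have hlog : (1 - d) / d < Real.log x := by
        calc (1-d)/d = Real.log (Real.exp ((1-d)/d)) := (Real.log_exp _).symm
          _ < Real.log x := Real.log_lt_log (Real.exp_pos _) hx.1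
      rw [div_lt_iff₀ hdpos] at hlog
      nlinarith
  have := hmono ⟨hm, ht1.le⟩ ⟨(mLtOne' d hd).le, le_rfl⟩ ht1
  simpa using this

lemma derivC' (d : ℕ) (hd : 2 ≤ d) {t : ℝ} (ht : t ∈ Set.Ioo (0:ℝ) 1) :
    HasDerivAt (fun s : ℝ => -Real.log s / (1 - s) ^ d)
      (-(1 - t + d * t * Real.log t) / (t * (1 - t) ^ (d + 1))) t := by
  obtain ⟨ht0, ht1⟩ := ht
  have hs : (0:ℝ) < 1 - t := by linarith
  have h1 : HasDerivAt (fun s : ℝ => -Real.log s) (-t⁻¹) t :=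
    (Real.hasDerivAt_log (ne_of_gt ht0)).neg
  have h2 : HasDerivAt (fun s : ℝ => (1 - s) ^ d) ((d : ℝ) * (1 - t) ^ (d - 1) * (0 - 1)) t :=
    (((hasDerivAt_const t (1:ℝ)).sub (hasDerivAt_id t)).pow d)
  have h3 := h1.div h2 (by positivity)
  refine h3.congr_deriv (Eq.symm ?_)
  obtain ⟨k, rfl⟩ : ∃ k, d = k + 2 := ⟨d - 2, by omega⟩
  have hk1 : k + 2 - 1 = k + 1 := by omega
  rw [hk1]
  have h1t : (1 - t) ≠ 0 := ne_of_gt hs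
  field_simp
  ring

lemma contC' (d : ℕ) (hd : 2 ≤ d) {S : Set ℝ} (hS : S ⊆ Set.Ioo (0:ℝ) 1) :
    ContinuousOn (fun s : ℝ => -Real.log s / (1 - s) ^ d) S :=
  fun x hx => ((derivC' d hd (hS hx)).differentiableAt.continuousAt).continuousWithinAt

/-- For `d ≥ 2` and `c > c_d^*`, with `t_c` the smallest root in `(0,1)`
of `t = e^{-c(1-t)^d}` (given here as a function `tc` on `(c_d^*, ∞)`), the function
`g_d(c) = c·t_c·(1-t_c)^d + c/(d+1)·(1-t_c)^{d+1} - (1-t_c)` is differentiable with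
`g_d'(c) = (1/(d+1))·(1-t_c)^{d+1}`. -/
theorem statement15 (d : ℕ) (hd : 2 ≤ d) (td : ℝ)
    (htd : td ∈ Set.Ioo (0 : ℝ) 1)
    (hroot : ((d : ℝ) + 1) * (1 - td) + (1 + (d : ℝ) * td) * Real.log td = 0)
    (tc : ℝ → ℝ)
    (htc : ∀ c : ℝ, c > -Real.log td / (1 - td) ^ d →
      tc c ∈ Set.Ioo (0 : ℝ) 1 ∧ tc c = Real.exp (-c * (1 - tc c) ^ d) ∧
        ∀ t ∈ Set.Ioo (0 : ℝ) 1, t = Real.exp (-c * (1 - t) ^ d) → tc c ≤ t) :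
    ∀ c : ℝ, c > -Real.log td / (1 - td) ^ d →
      HasDerivAt (fun x : ℝ =>
          x * tc x * (1 - tc x) ^ d + x / ((d : ℝ) + 1) * (1 - tc x) ^ (d + 1) - (1 - tc x))
        ((1 / ((d : ℝ) + 1)) * (1 - tc c) ^ (d + 1)) c := by
  have hdR : (2:ℝ) ≤ (d:ℝ) := by exact_mod_cast hd
  set cstar := -Real.log td / (1 - td) ^ d with hcstar
  set m := Real.exp ((1 - d) / d) with hm
  set U : ℝ → ℝ := fun s => 1 - s + d * s * Real.log s with hU
  set Cf : ℝ → ℝ := fun s => -Real.log s / (1 - s) ^ d with hCf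
  -- key claim: for all x > cstar, the log identity and nonneg of U at tc x
  have key : ∀ x : ℝ, cstar < x →
      (Real.log (tc x) = -x * (1 - tc x)^d) ∧ (0 ≤ U (tc x)) := by
    intro x hx
    obtain ⟨hmem, heq, hmin⟩ := htc x hx
    obtain ⟨ht0, ht1⟩ := hmem
    have hlog : Real.log (tc x) = -x * (1 - tc x) ^ d := by
      conv_lhs => rw [heq]
      rw [Real.log_exp]
    refine ⟨hlog, ?_⟩
    by_contra hcon
    push_neg at hcon
    set t := tc x with htdef
    have h1t : (0:ℝ) < 1 - t := by linarith
    set ψ : ℝ → ℝ := fun s => s - Real.exp (-x * (1 - s) ^ d) with hψ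
    have hg : HasDerivAt (fun s : ℝ => -x * (1 - s) ^ d)
        (-x * ((d : ℝ) * (1 - t) ^ (d - 1) * (0 - 1))) t :=
      (((hasDerivAt_const t (1:ℝ)).sub (hasDerivAt_id t)).pow d).const_mul (-x)
    have hψd : HasDerivAt ψ
        (1 - Real.exp (-x * (1 - t) ^ d) * (-x * ((d : ℝ) * (1 - t) ^ (d - 1) * (0 - 1)))) t :=
      (hasDerivAt_id t).sub hg.exp
    have hψ't : (1 - Real.exp (-x * (1 - t) ^ d) * (-x * ((d : ℝ) * (1 - t) ^ (d - 1) * (0 - 1)))) < 0 := by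
      have hexp : Real.exp (-x * (1 - t) ^ d) = t := heq.symm
      rw [hexp]
      obtain ⟨k, hk⟩ : ∃ k, d = k + 2 := ⟨d - 2, by omega⟩
      simp only [hU] at hcon
      rw [hk] at hcon ⊢
      have hk1 : k + 2 - 1 = k + 1 := by omega
      rw [hk1]
      rw [hlog, htdef] at hcon
      rw [hk] at hcon
      have hpow : (1 - t)^(k+2) = (1-t)^(k+1) * (1-t) := by ring
      rw [← htdef] at hcon
      rw [hpow] at hcon
      have : (1 - t) * (1 - t * (↑(k+2) * (1-t)^(k+1)) * x) < 0 := by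
        push_cast at hcon ⊢
        nlinarith [hcon]
      nlinarith [this, h1t]
    have hslope := hasDerivAt_iff_tendsto_slope.mp hψd
    have hev : ∀ᶠ s in 𝓝[≠] t, slope ψ t s < 0 := hslope.eventually_lt_const hψ't
    have hev' : ∀ᶠ s in 𝓝[<] t, slope ψ t s < 0 :=
      hev.filter_mono (nhdsWithin_mono t (fun s hs => ne_of_lt hs))
    have hIoo : Set.Ioo (0:ℝ) t ∈ 𝓝[<] t := Ioo_mem_nhdsLT_of_mem ⟨ht0, le_rfl⟩
    obtain ⟨s, hsl, hsmem⟩ := (hev'.and (eventually_of_mem hIoo (fun y hy => hy))).exists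
    have hψt : ψ t = 0 := by
      rw [hψ]; simp only; rw [← heq]; ring
    have hψs : 0 < ψ s := by
      have h1 : (ψ s - ψ t) / (s - t) < 0 := by rwa [slope_def_field] at hsl
      rw [hψt, sub_zero] at h1
      rcases div_neg_iff.mp h1 with ⟨h2, h3⟩ | ⟨h2, h3⟩
      · linarith [hsmem.2]
      · exact absurd h3 (by linarith [hsmem.2])
    have hψ0 : ψ 0 < 0 := by
      have := Real.exp_pos (-x * (1 - (0:ℝ)) ^ d)
      simp only [hψ]
      linarith
    have hψcont : Continuous ψ := by fun_prop
    obtain ⟨r, hrmem, hr⟩ := intermediate_value_Icc hsmem.1.le hψcont.continuousOn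
      (⟨hψ0.le, hψs.le⟩ : (0:ℝ) ∈ Set.Icc (ψ 0) (ψ s))
    have hr0 : 0 < r := by
      rcases eq_or_lt_of_le hrmem.1 with h | h
      · exfalso; rw [← h] at hr; linarith
      · exact h
    have hr1 : r < 1 := by linarith [hrmem.2, hsmem.2]
    have hrroot : r = Real.exp (-x * (1 - r) ^ d) := by
      have : r - Real.exp (-x * (1 - r) ^ d) = 0 := hr
      linarith
    have := hmin r ⟨hr0, hr1⟩ hrroot
    linarith [hrmem.2, hsmem.2]
  -- now the main body
  intro c hc
  obtain ⟨⟨ht00, ht01⟩, heq0, hmin0⟩ := htc c hc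
  set t0 := tc c with ht0def
  have hs0 : (0:ℝ) < 1 - t0 := by linarith
  obtain ⟨hlog0, hU0nn⟩ := key c hc
  rw [← ht0def] at hlog0 hU0nn
  have hCt0 : Cf t0 = c := by
    have h1t : ((1:ℝ) - t0) ≠ 0 := ne_of_gt hs0
    show -Real.log t0 / (1 - t0)^d = c
    rw [hlog0]; field_simp
  -- t0 < m whenever U t0 ≥ 0 (since U < 0 on [m, 1))
  have ht0m : t0 < m := by
    by_contra h
    push_neg at h
    have := uNegHigh' d hd h ht01
    simp only [hU] at hU0nn
    linarith
  -- U t0 > 0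
  have hU0pos : 0 < U t0 := by
    rcases lt_or_eq_of_le hU0nn with h | h
    · exact h
    -- U t0 = 0 : show Cf td ≥ Cf t0 = c, contradicting c > cstar = Cf td
    exfalso
    have hU0 : U t0 = 0 := h.symm
    simp only [hU] at hU0
    have hAnti : AntitoneOn Cf (Set.Ioc 0 t0) := by
      apply antitoneOn_of_deriv_nonpos (convex_Ioc _ _)
      · exact contC' d hd (fun y hy => ⟨hy.1, lt_of_le_of_lt hy.2 ht01⟩)
      · intro y hy
        rw [interior_Ioc] at hy
        exact (derivC' d hd ⟨hy.1, by linarith [hy.2]⟩).differentiableAt.differentiableWithinAt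
      · intro y hy
        rw [interior_Ioc] at hy
        have hy1 : y < 1 := by linarith [hy.2]
        rw [(derivC' d hd ⟨hy.1, hy1⟩).deriv]
        have hUy : 0 ≤ U y := by
          have := uAnti' d hd ⟨hy.1, by linarith [ht0m, hy.2]⟩ ⟨ht00, ht0m.le⟩ hy.2.le
          simp only [hU] at this ⊢
          linarith
        apply div_nonpos_of_nonpos_of_nonneg
        · simp only [hU] at hUy; linarith
        · exact mul_nonneg hy.1.le (pow_nonneg (by linarith [hy.2, ht01]) _)
    have hMono : MonotoneOn Cf (Set.Ico t0 1) := by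
      apply monotoneOn_of_deriv_nonneg (convex_Ico _ _)
      · exact contC' d hd (fun y hy => ⟨lt_of_lt_of_le ht00 hy.1, hy.2⟩)
      · intro y hy
        rw [interior_Ico] at hy
        exact (derivC' d hd ⟨lt_trans ht00 hy.1, hy.2⟩).differentiableAt.differentiableWithinAt
      · intro y hy
        rw [interior_Ico] at hy
        rw [(derivC' d hd ⟨lt_trans ht00 hy.1, hy.2⟩).deriv]
        have hUy : U y ≤ 0 := by
          rcases le_or_gt y m with hym | hym
          · have := uAnti' d hd ⟨ht00, ht0m.le⟩ ⟨lt_trans ht00 hy.1, hym⟩ hy.1.le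
            simp only [hU] at this ⊢
            linarith
          · exact (uNegHigh' d hd hym.le hy.2).le
        apply div_nonneg
        · simp only [hU] at hUy; linarith
        · exact mul_nonneg (le_of_lt (lt_trans ht00 hy.1)) (pow_nonneg (by linarith [hy.2]) _)
    have hge : c ≤ Cf td := by
      rcases le_or_gt td t0 with hle | hlt
      · have := hAnti ⟨htd.1, hle⟩ ⟨ht00, le_rfl⟩ hle
        rw [hCt0] at this; exact this
      · have := hMono ⟨le_rfl, ht01⟩ ⟨hlt.le, htd.2⟩ hlt.le
        rw [hCt0] at this; exact this
    rw [hcstar] at hc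
    exact absurd hge (not_le.mpr (by rw [hCf] at hge ⊢; exact lt_of_lt_of_le hc le_rfl))
  -- pick b with t0 < b < m and U b > 0
  have hUcont : ContinuousAt U t0 := (derivU' d ht00).differentiableAt.continuousAt
  have hevU : ∀ᶠ s in 𝓝 t0, 0 < U s := hUcont.eventually (eventually_gt_nhds hU0pos)
  have hIoom : Set.Ioo t0 m ∈ 𝓝[>] t0 := Ioo_mem_nhdsGT_of_mem ⟨le_rfl, ht0m⟩
  obtain ⟨b, hUb, hbmem⟩ := ((hevU.filter_mono nhdsWithin_le_nhds).and
    (eventually_of_mem hIoom (fun y hy => hy))).exists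
  have hb1 : b < 1 := lt_trans hbmem.2 (mLtOne' d hd)
  -- Cf is strictly antitone on Ioc 0 b
  have hCanti : StrictAntiOn Cf (Set.Ioc 0 b) := by
    apply strictAntiOn_of_deriv_neg (convex_Ioc _ _)
    · exact contC' d hd (fun y hy => ⟨hy.1, lt_of_le_of_lt hy.2 hb1⟩)
    · intro y hy
      rw [interior_Ioc] at hy
      have hy1 : y < 1 := lt_trans hy.2 hb1
      rw [(derivC' d hd ⟨hy.1, hy1⟩).deriv]
      have hUy : 0 < U y := by
        have h1 := uAnti' d hd ⟨hy.1, le_trans hy.2.le hbmem.2.le⟩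
          ⟨lt_trans ht00 hbmem.1, hbmem.2.le⟩ hy.2.le
        have h2 : 0 < 1 - b + d * b * Real.log b := by simpa [hU] using hUb
        simp only [hU] at h1 ⊢
        linarith
      apply div_neg_of_neg_of_pos
      · simp only [hU] at hUy; linarith
      · exact mul_pos hy.1 (pow_pos (by linarith) _)
  -- continuity of tc at c
  have hcontTc : ContinuousAt tc c := by
    rw [Metric.continuousAt_iff]
    intro ε hε
    set ε' := min (ε/2) (min ((b - t0)/2) (t0/2)) with hε'def
    have hε' : 0 < ε' := by
      apply lt_min (by linarith)
      exact lt_min (by linarith [hbmem.1]) (by linarith)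
    have hε'b : ε' ≤ (b - t0)/2 := le_trans (min_le_right _ _) (min_le_left _ _)
    have hε't : ε' ≤ t0/2 := le_trans (min_le_right _ _) (min_le_right _ _)
    have hε'ε : ε' ≤ ε/2 := min_le_left _ _
    set t1 := t0 - ε' with ht1def
    set t2 := t0 + ε' with ht2def
    have ht1pos : 0 < t1 := by rw [ht1def]; linarith
    have ht2b : t2 < b := by rw [ht2def]; linarith
    have hmem1 : t1 ∈ Set.Ioc 0 b := ⟨ht1pos, by rw [ht1def]; linarith⟩
    have hmem0 : t0 ∈ Set.Ioc 0 b := ⟨ht00, hbmem.1.le⟩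
    have hmem2 : t2 ∈ Set.Ioc 0 b := ⟨by rw [ht2def]; linarith, ht2b.le⟩
    have hc1 : c < Cf t1 := by
      have := hCanti hmem1 hmem0 (by rw [ht1def]; linarith)
      rwa [hCt0] at this
    have hc2 : Cf t2 < c := by
      have := hCanti hmem0 hmem2 (by rw [ht2def]; linarith)
      rwa [hCt0] at this
    refine ⟨min (Cf t1 - c) (min (c - Cf t2) (c - cstar)), by
      apply lt_min (by linarith)
      exact lt_min (by linarith) (by linarith [hc]), ?_⟩
    intro x hx
    rw [Real.dist_eq] at hx
    have hx1 : x < Cf t1 := by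
      have h2 := (abs_lt.mp hx).2
      have h3 := min_le_left (Cf t1 - c) (min (c - Cf t2) (c - cstar))
      linarith
    have hx2 : Cf t2 < x := by
      have h2 := (abs_lt.mp hx).1
      have := le_trans (min_le_right (Cf t1 - c) _) (min_le_left (c - Cf t2) (c - cstar))
      linarith
    have hxstar : cstar < x := by
      have h2 := (abs_lt.mp hx).1
      have := le_trans (min_le_right (Cf t1 - c) _) (min_le_right (c - Cf t2) (c - cstar))
      linarith
    obtain ⟨hlogx, _⟩ := key x hxstar
    obtain ⟨⟨hx0, hx1'⟩, heqx, hminx⟩ := htc x hxstar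
    have hCx : Cf (tc x) = x := by
      show -Real.log (tc x) / (1 - tc x)^d = x
      have h1t : ((1:ℝ) - tc x) ≠ 0 := by linarith
      rw [hlogx]; field_simp
    -- upper bound: find root r in [t1, t2]
    have hcontC : ContinuousOn Cf (Set.Icc t1 t2) :=
      contC' d hd (fun y hy => ⟨lt_of_lt_of_le ht1pos hy.1, by
        have := hy.2; rw [ht2def] at this; linarith [hb1]⟩)
    have ht12 : t1 ≤ t2 := by rw [ht1def, ht2def]; linarith
    obtain ⟨r, hrmem, hCr⟩ := intermediate_value_Icc' ht12 hcontC
      (⟨hx2.le, hx1.le⟩ : x ∈ Set.Icc (Cf t2) (Cf t1))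
    have hr0 : 0 < r := lt_of_lt_of_le ht1pos hrmem.1
    have hr1 : r < 1 := by linarith [hrmem.2, ht2b, hb1]
    have hrroot : r = Real.exp (-x * (1 - r) ^ d) := by
      have h1r : ((1:ℝ) - r) ≠ 0 := by linarith
      have hlogr : Real.log r = -x * (1 - r)^d := by
        have : -Real.log r / (1 - r)^d = x := hCr
        field_simp at this
        linarith
      rw [← hlogr, Real.exp_log hr0]
    have hup : tc x ≤ t2 := le_trans (hminx r ⟨hr0, hr1⟩ hrroot) hrmem.2
    have hlow : t1 ≤ tc x := by
      by_contra h
      push_neg at h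
      have hmemx : tc x ∈ Set.Ioc 0 b := ⟨hx0, by linarith [hmem1.2]⟩
      have h2 := hCanti hmemx hmem1 h
      rw [hCx] at h2
      linarith
    rw [Real.dist_eq, abs_lt]
    constructor
    · rw [ht1def] at hlow; linarith
    · rw [ht2def] at hup; linarith
  -- eventually Cf (tc y) = y
  have hev : ∀ᶠ y in 𝓝 c, Cf (tc y) = y := by
    filter_upwards [Ioi_mem_nhds hc] with y hy
    obtain ⟨hlogy, _⟩ := key y hy
    obtain ⟨⟨hy0, hy1⟩, _, _⟩ := htc y hy
    show -Real.log (tc y) / (1 - tc y)^d = y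
    have h1t : ((1:ℝ) - tc y) ≠ 0 := by linarith
    rw [hlogy]; field_simp
  -- derivative of tc
  have hCderiv : HasDerivAt Cf (-(U t0) / (t0 * (1 - t0) ^ (d + 1))) t0 := by
    have := derivC' d hd ⟨ht00, ht01⟩
    simpa [hU, hCf] using this
  have hCd0 : -(U t0) / (t0 * (1 - t0) ^ (d + 1)) ≠ 0 := by
    apply ne_of_lt
    apply div_neg_of_neg_of_pos (by linarith)
    exact mul_pos ht00 (pow_pos hs0 _)
  have htcD : HasDerivAt tc (-(U t0) / (t0 * (1 - t0) ^ (d + 1)))⁻¹ c :=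
    HasDerivAt.of_local_left_inverse hcontTc (ht0def ▸ hCderiv) hCd0 hev
  -- assemble
  set τ := (-(U t0) / (t0 * (1 - t0) ^ (d + 1)))⁻¹ with hτdef
  have hA : HasDerivAt (fun x : ℝ => x * tc x) (1 * tc c + c * τ) c :=
    (hasDerivAt_id c).mul htcD
  have hS : HasDerivAt (fun x : ℝ => 1 - tc x) (0 - τ) c :=
    (hasDerivAt_const c (1:ℝ)).sub htcD
  have hP : HasDerivAt (fun x : ℝ => (1 - tc x) ^ d)
      ((d:ℝ) * (1 - tc c) ^ (d - 1) * (0 - τ)) c := hS.pow d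
  have hB := hA.mul hP
  have hC2 : HasDerivAt (fun x : ℝ => x / ((d:ℝ) + 1)) (1 / ((d:ℝ) + 1)) c := by
    simpa using (hasDerivAt_id c).div_const ((d:ℝ) + 1)
  have hP3 : HasDerivAt (fun x : ℝ => (1 - tc x) ^ (d + 1))
      (((d:ℝ) + 1) * (1 - tc c) ^ (d + 1 - 1) * (0 - τ)) c := by
    have := hS.pow (d + 1)
    exact this.congr_deriv (by push_cast; ring)
  have hD := hC2.mul hP3
  have htotal := (hB.add hD).sub hS
  refine htotal.congr_deriv (Eq.symm ?_)
  -- final algebraic identity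
  rw [← ht0def]
  obtain ⟨k, hk⟩ : ∃ k, d = k + 2 := ⟨d - 2, by omega⟩
  have hUne : U t0 ≠ 0 := ne_of_gt hU0pos
  have h1t : ((1:ℝ) - t0) ≠ 0 := ne_of_gt hs0
  have hd1 : d - 1 = k + 1 := by omega
  have hd11 : d + 1 - 1 = d := by omega
  have hXne : t0 * (1 - t0) ^ (d + 1) ≠ 0 :=
    mul_ne_zero (ne_of_gt ht00) (pow_ne_zero _ h1t)
  have hinv : (-(U t0) / (t0 * (1 - t0) ^ (d + 1)))⁻¹
      = -(t0 * (1 - t0) ^ (d + 1)) / (U t0) := by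
    rw [inv_div, div_neg, neg_div]
  have hWτ : U t0 * τ = -(t0 * (1 - t0) ^ (d + 1)) := by
    rw [hτdef, hinv]
    field_simp
  have hWlog : U t0 = 1 - t0 + ((k:ℝ) + 2) * t0 * (-c * (1 - t0) ^ (k + 2)) := by
    simp only [hU]
    rw [hlog0, hk]
    push_cast
    ring
  rw [hWlog, hk] at hWτ
  rw [hd1, hd11, hk]
  push_cast at hWτ ⊢
  have hdne : ((k:ℝ) + 2 + 1) ≠ 0 := by positivity
  have hJ : ((k:ℝ) + 2 + 1) * ((k:ℝ) + 2 + 1)⁻¹ = 1 := mul_inv_cancel₀ hdne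
  apply mul_left_cancel₀ h1t
  linear_combination (-1 : ℝ) * hWτ + (c * τ * (1 - t0) ^ (k + 2 + 1)) * hJ
end

section
/- There exists a constant C > 0 such that for every integer d ≥ 2: | t_d^* − e^{−(d+1)} | ≤ C·d²·e^{−2d} and | c_d^* − (d+1)·(1 − e^{−(d+1)}) | ≤ C·d³·e^{−2d}. In particular, t_d^* = e^{−(d+1)} + O_d(d²e^{−2d}) and c_d^* = (d+1)(1 − e^{−(d+1)}) + O_d(d³e^{−2d}) as d → ∞. -/
open Real Set

lemma aux_log_lower {s : ℝ} (hs0 : 0 < s) (hs1 : s < 1) :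
    s^2 - 1 < 2 * s * Real.log s := by
  set f : ℝ → ℝ := fun x => 2 * Real.log x - x + x⁻¹ with hf
  have hanti : StrictAntiOn f (Set.Ioc (0:ℝ) 1) := by
    apply strictAntiOn_of_deriv_neg (convex_Ioc 0 1)
    · intro x hx
      exact (((Real.continuousAt_log hx.1.ne').const_smul (2:ℝ)).sub continuousAt_id |>.add
        (continuousAt_inv₀ hx.1.ne')).continuousWithinAt
    · intro x hx
      rw [interior_Ioc] at hx
      have hx0 := hx.1
      have hd : HasDerivAt f (2 * x⁻¹ - 1 + (-(x^2)⁻¹)) x := by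
        have h1 := ((Real.hasDerivAt_log hx0.ne').const_mul 2).sub (hasDerivAt_id x)
        have h2 := h1.add (hasDerivAt_inv hx0.ne')
        exact h2
      rw [hd.deriv]
      have h : x^2 * (2 * x⁻¹ - 1 + -(x^2)⁻¹) = 2*x - x^2 - 1 := by
        field_simp; ring
      nlinarith [h, mul_pos hx0 hx0, mul_pos (sub_pos.mpr hx.2) (sub_pos.mpr hx.2)]
  have hmem1 : s ∈ Set.Ioc (0:ℝ) 1 := ⟨hs0, hs1.le⟩
  have hmem2 : (1:ℝ) ∈ Set.Ioc (0:ℝ) 1 := ⟨one_pos, le_refl 1⟩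
  have hlt := hanti hmem1 hmem2 hs1
  have hf1 : f 1 = 0 := by simp [hf]
  have hfs : 0 < 2 * Real.log s - s + s⁻¹ := by rw [hf1] at hlt; exact hlt
  have hsinv : s * s⁻¹ = 1 := mul_inv_cancel₀ hs0.ne'
  nlinarith [hfs, hs0, hsinv]

lemma root_small {d : ℕ} (hd : 2 ≤ d) {t : ℝ} (ht0 : 0 < t) (ht1 : t < 1)
    (heq : ((d:ℝ)+1)*(1-t) + (1+(d:ℝ)*t)*Real.log t = 0) : (d:ℝ)^2 * t < 1 := by
  set D := (d:ℝ) with hD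
  have hD2 : (2:ℝ) ≤ D := by rw [hD]; exact_mod_cast hd
  by_contra hcon
  push_neg at hcon
  set s := Real.sqrt t with hs
  have hs0 : 0 < s := Real.sqrt_pos.mpr ht0
  have hs2 : s^2 = t := Real.sq_sqrt ht0.le
  have hs1 : s < 1 := by nlinarith
  rw [← hs2] at heq hcon
  rw [Real.log_pow] at heq
  push_cast at heq
  have hDs : 1 ≤ D * s := by
    nlinarith [mul_pos (show (0:ℝ) < D by linarith) hs0]
  have hlow := aux_log_lower hs0 hs1
  have hpos : (0:ℝ) < 1 + D*s^2 := by positivity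
  have heq2 : s*(D+1)*(1-s^2) + (1+D*s^2)*(2*s*Real.log s) = 0 := by
    linear_combination s * heq
  have h5 : (1+D*s^2)*(s^2-1) < (1+D*s^2)*(2*s*Real.log s) :=
    mul_lt_mul_of_pos_left hlow hpos
  have hfac : 0 ≤ (1-s^2)*((1-s)*(D*s-1)) := by
    apply mul_nonneg (by nlinarith)
    apply mul_nonneg (by linarith) (by linarith)
  nlinarith [h5, heq2, hfac]

set_option maxHeartbeats 4000000 in
/-- There is a constant `C > 0` such that for every integer `d ≥ 2`
(with `t_d^*` the root in `(0,1)` of `(d+1)(1-t)+(1+dt)ln t = 0` and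
`c_d^* = (-ln t_d^*)/(1-t_d^*)^d`):
`|t_d^* - e^{-(d+1)}| ≤ C d² e^{-2d}` and `|c_d^* - (d+1)(1-e^{-(d+1)})| ≤ C d³ e^{-2d}`. -/
theorem statement17 :
    ∃ C : ℝ, 0 < C ∧ ∀ d : ℕ, 2 ≤ d → ∀ td : ℝ, td ∈ Set.Ioo (0 : ℝ) 1 →
      ((d : ℝ) + 1) * (1 - td) + (1 + (d : ℝ) * td) * Real.log td = 0 →
      |td - Real.exp (-((d : ℝ) + 1))| ≤ C * (d : ℝ) ^ 2 * Real.exp (-2 * (d : ℝ)) ∧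
      |(-Real.log td / (1 - td) ^ d) - ((d : ℝ) + 1) * (1 - Real.exp (-((d : ℝ) + 1)))| ≤
        C * (d : ℝ) ^ 3 * Real.exp (-2 * (d : ℝ)) := by
  refine ⟨1000, by norm_num, ?_⟩
  intro d hd t htmem heq
  obtain ⟨ht0, ht1⟩ := htmem
  set D := (d:ℝ) with hD
  have hD2 : (2:ℝ) ≤ D := by rw [hD]; exact_mod_cast hd
  have hD0 : (0:ℝ) < D := by linarith
  have hsmall : D^2 * t < 1 := root_small hd ht0 ht1 heq
  have hden : (0:ℝ) < 1 + D*t := by have := mul_pos hD0 ht0; linarith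
  clear_value D
  set E := Real.exp (-(D+1)) with hE
  clear_value E
  have hEpos : 0 < E := by rw [hE]; exact Real.exp_pos _
  set δ := (D+1)^2 * t / (1+D*t) with hδ
  have hδ0 : 0 ≤ δ := by
    apply div_nonneg _ hden.le
    have := mul_pos hD0 ht0; positivity
  have hδle : δ ≤ (D+1)^2 * t := div_le_self (by positivity) (by have := mul_pos hD0 ht0; linarith)
  have hδ94 : δ ≤ 9/4 := by
    have h4 : 4*(D+1)^2 ≤ 9*D^2 := by nlinarith [sq_nonneg (D-2)]
    linarith [hδle, mul_le_mul_of_nonneg_right h4 ht0.le, hsmall, mul_pos ht0 ht0]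
  have hδeq : (1+D*t) * δ = (D+1)^2 * t := by
    rw [hδ]; field_simp
  clear_value δ
  have hlog : Real.log t = -(D+1) + δ := by
    have h2 : (1+D*t) * Real.log t = (1+D*t) * (-(D+1)+δ) := by
      linear_combination heq - hδeq
    exact mul_left_cancel₀ hden.ne' h2
  have ht_eq : t = E * Real.exp δ := by
    conv_lhs => rw [← Real.exp_log ht0]
    rw [hlog, Real.exp_add, hE]
  have hX1 : 1 ≤ Real.exp δ := Real.one_le_exp hδ0
  have htE : E ≤ t := by
    have := mul_le_mul_of_nonneg_left hX1 hEpos.le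
    rw [ht_eq]; linarith
  set M := Real.exp (9/4:ℝ) with hM
  clear_value M
  have hXM : Real.exp δ ≤ M := by rw [hM]; exact Real.exp_le_exp.mpr hδ94
  have hX_1 : Real.exp δ - 1 ≤ δ * Real.exp δ := by
    have h := Real.add_one_le_exp (-δ)
    rw [Real.exp_neg] at h
    have h2 := mul_le_mul_of_nonneg_right h (Real.exp_pos δ).le
    rw [inv_mul_cancel₀ (Real.exp_pos δ).ne'] at h2
    linarith [h2]
  have hMpos : 0 < M := by rw [hM]; exact Real.exp_pos _
  have htEM : t ≤ E * M := by
    have := mul_le_mul_of_nonneg_left hXM hEpos.le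
    rw [ht_eq]; linarith
  have hEM : E * M = Real.exp (5/4 - D) := by
    rw [hE, hM, ← Real.exp_add]; congr 1; ring
  have hEM2 : (E*M)^2 = Real.exp (5/2) * Real.exp (-2*D) := by
    rw [hEM, sq, ← Real.exp_add, ← Real.exp_add]; congr 1; ring
  have hexp52 : Real.exp (5/2:ℝ) ≤ 21 := by
    have h3 : Real.exp (5/2:ℝ) ≤ Real.exp 3 := Real.exp_le_exp.mpr (by norm_num)
    have he : Real.exp (3:ℝ) = Real.exp 1 ^ 3 := by
      rw [← Real.exp_nat_mul]; norm_num
    have h1 : Real.exp 1 ≤ 2.7182818286 := Real.exp_one_lt_d9.le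
    have hp : Real.exp 1 ^ 3 ≤ 2.7182818286 ^ 3 :=
      pow_le_pow_left₀ (Real.exp_pos 1).le h1 3
    have hn : (2.7182818286:ℝ) ^ 3 ≤ 21 := by norm_num
    linarith [h3, he.le, hp, hn]
  have hexpneg : 0 < Real.exp (-2*D) := Real.exp_pos _
  -- part 1 intermediate bound
  have hpart1' : t - E ≤ 48 * (D^2 * Real.exp (-2*D)) := by
    have s1a := mul_le_mul_of_nonneg_left hX_1 hEpos.le
    have s1b := mul_le_mul_of_nonneg_left hXM (mul_nonneg hEpos.le hδ0)
    have s1 : t - E ≤ E * (δ * M) := by rw [ht_eq]; linarith [s1a, s1b]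
    have s2 : δ ≤ (D+1)^2 * (E*M) :=
      le_trans hδle (mul_le_mul_of_nonneg_left htEM (by positivity))
    have s3 : t - E ≤ (D+1)^2 * (E*M)^2 := by
      have s2b := mul_le_mul_of_nonneg_left s2 (mul_nonneg hEpos.le hMpos.le)
      linarith [s1, s2b]
    have s4 : 21*(D+1)^2 ≤ 48*D^2 := by nlinarith [sq_nonneg (D-2), hD2]
    have s5 : Real.exp (5/2) * Real.exp (-2*D) ≤ 21 * Real.exp (-2*D) :=
      mul_le_mul_of_nonneg_right hexp52 hexpneg.le
    rw [hEM2] at s3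
    linarith [s3, mul_le_mul_of_nonneg_right s4 hexpneg.le,
      mul_le_mul_of_nonneg_left s5 (sq_nonneg (D+1))]
  constructor
  · rw [abs_of_nonneg (by linarith : (0:ℝ) ≤ t - E)]
    linarith [hpart1', mul_nonneg (sq_nonneg D) hexpneg.le]
  -- part 2
  have h1t : 0 < 1 - t := by linarith
  have hpow : 0 < (1-t)^d := pow_pos h1t d
  set Q := (1+D*t) * (1-t)^d with hQ
  clear_value Q
  have hb1 : 1 - t ≤ Real.exp (-t) := by linarith [Real.add_one_le_exp (-t)]
  have hp1 : (1-t)^d ≤ Real.exp (-t) ^ d := pow_le_pow_left₀ h1t.le hb1 d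
  have hp2 : Real.exp (-t)^d = Real.exp (-(D*t)) := by
    rw [← Real.exp_nat_mul]; congr 1; rw [hD]; ring
  have hb2 : 1 + D*t ≤ Real.exp (D*t) := by linarith [Real.add_one_le_exp (D*t)]
  have hQub : Q ≤ 1 := by
    rw [hQ]
    calc (1+D*t)*(1-t)^d ≤ Real.exp (D*t) * Real.exp (-(D*t)) := by
          apply mul_le_mul hb2 (hp1.trans_eq hp2) (pow_nonneg h1t.le d) (Real.exp_pos _).le
      _ = 1 := by rw [← Real.exp_add]; simp
  have hBer : 1 - D*t ≤ (1-t)^d := by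
    have h := one_add_mul_le_pow (show (-2:ℝ) ≤ -t by linarith) d
    have he : (1:ℝ) + -t = 1 - t := by ring
    rw [he] at h
    rw [hD]
    linarith [h]
  have hQlb : 1 - D^2*t^2 ≤ Q := by
    rw [hQ]
    linarith [mul_le_mul_of_nonneg_left hBer (show (0:ℝ) ≤ 1+D*t by linarith),
      mul_pos ht0 ht0]
  have hDt2 : D^2*t^2 ≤ 1/4 := by
    have m1 : D^2*t*t < 1*t := mul_lt_mul_of_pos_right hsmall ht0
    have m2 : 0 ≤ (D^2-4)*t := mul_nonneg (by nlinarith [sq_nonneg (D-2), hD2]) ht0.le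
    linarith [m1, m2, hsmall]
  have hQ34 : (3/4:ℝ) ≤ Q := by linarith
  have hQpos : (0:ℝ) < Q := by linarith
  have hc : -Real.log t / (1-t)^d = (D+1) * ((1-t)/Q) := by
    rw [hQ]
    have hlt : -Real.log t = (D+1)*(1-t)/(1+D*t) := by
      rw [eq_div_iff hden.ne']
      linear_combination -heq
    rw [hlt]
    field_simp
  set A := (1-t)/Q with hA
  clear_value A
  have hAsub : A - (1-t) = (1-t)*(1-Q)/Q := by
    rw [hA]; field_simp
  have hA1 : 0 ≤ A - (1-t) := by
    rw [hAsub]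
    apply div_nonneg _ hQpos.le
    exact mul_nonneg h1t.le (by linarith)
  have hA2 : A - (1-t) ≤ (4/3)*(D^2*t^2) := by
    rw [hAsub]
    have hnum : (1-t)*(1-Q) ≤ D^2*t^2 := by
      have h9 : (1-t)*(1-Q) ≤ 1*(1-Q) := by
        apply mul_le_mul_of_nonneg_right (by linarith) (by linarith)
      linarith
    calc (1-t)*(1-Q)/Q ≤ (D^2*t^2)/(3/4) := by
          exact div_le_div₀ (by positivity) hnum (by norm_num) hQ34
      _ = (4/3)*(D^2*t^2) := by ring
  have ht2bound : D^2*t^2 ≤ 21*(D^2*Real.exp (-2*D)) := by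
    have hsq : t^2 ≤ (E*M)^2 := pow_le_pow_left₀ ht0.le htEM 2
    have c1 : D^2*t^2 ≤ D^2*((E*M)^2) := mul_le_mul_of_nonneg_left hsq (sq_nonneg D)
    have c2 : Real.exp (5/2) * Real.exp (-2*D) ≤ 21 * Real.exp (-2*D) :=
      mul_le_mul_of_nonneg_right hexp52 hexpneg.le
    calc D^2*t^2 ≤ D^2*((E*M)^2) := c1
      _ = D^2*(Real.exp (5/2)*Real.exp (-2*D)) := by rw [hEM2]
      _ ≤ D^2*(21*Real.exp (-2*D)) := mul_le_mul_of_nonneg_left c2 (sq_nonneg D)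
      _ = 21*(D^2*Real.exp (-2*D)) := by ring
  have habs : |A - (1-E)| ≤ 76*(D^2*Real.exp (-2*D)) := by
    rw [abs_le]
    constructor
    · linarith [hA1, hpart1', mul_nonneg (sq_nonneg D) hexpneg.le]
    · linarith [hA2, ht2bound, htE, mul_nonneg (sq_nonneg D) hexpneg.le]
  rw [hc]
  have hre : (D+1)*A - (D+1)*(1-E) = (D+1)*(A - (1-E)) := by ring
  rw [hre, abs_mul, abs_of_nonneg (by linarith : (0:ℝ) ≤ D+1)]
  have hcube : 76*(D+1)*D^2 ≤ 1000*D^3 := by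
    have m : 0 ≤ D^2*(D-1) := mul_nonneg (sq_nonneg D) (by linarith)
    linarith [m, sq_nonneg D]
  have hD3 : (D+1)*(76*(D^2*Real.exp (-2*D))) ≤ 1000*D^3*Real.exp (-2*D) := by
    linarith [mul_le_mul_of_nonneg_right hcube hexpneg.le]
  calc (D+1)*|A - (1-E)| ≤ (D+1)*(76*(D^2*Real.exp (-2*D))) :=
        mul_le_mul_of_nonneg_left habs (by linarith)
    _ ≤ 1000*D^3*Real.exp (-2*D) := hD3
end
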